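/- arXiv:2502.13865 — 8 statements merged into one kernel-verified Lean document; each statement's English description precedes it below -/
import Mathlib

section
/- For every real C ≥ 1 there exists K ≥ 1 (depending only on C) such that the following holds. Let (X, μ) be a C-coarse median space, let x, y, z ∈ X and R ≥ 0, and consider points a ∈ N_R([x,y]_μ) ∩ N_R([x,z]_μ), b ∈ N_R([y,z]_μ) ∩ N_R([y,x]_μ) and c ∈ N_R([z,x]_μ) ∩ N_R([z,y]_μ). Then dist(μ(a,b,c), μ(x,y,z)) ≤ K·R + K. -/
open Metric Set

universe u

/-- A `C`-coarse median on a metric space `X`. -/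
def IsCoarseMedian {X : Type*} [MetricSpace X] (C : ℝ) (μ : X → X → X → X) : Prop :=
  (∀ x y z : X, μ x y z = μ y x z) ∧
  (∀ x y z : X, μ x y z = μ x z y) ∧
  (∀ x y : X, μ x x y = x) ∧
  (∀ x y z w : X, dist (μ (μ x w y) w z) (μ x w (μ y w z)) ≤ C) ∧
  (∀ x y z w : X, dist (μ x y z) (μ w y z) ≤ C * dist x w + C)

/-- The coarse median interval `[x,y]_μ = {μ x y z : z ∈ X}`. -/
def cmInterval {X : Type*} [MetricSpace X] (μ : X → X → X → X) (x y : X) : Set X :=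
  {w : X | ∃ z : X, μ x y z = w}

/-- The closed `R`-neighbourhood `{x : dist(x, A) ≤ R}` of a set. -/
def closedNbhd {X : Type*} [MetricSpace X] (R : ℝ) (A : Set X) : Set X :=
  {x : X | Metric.infDist x A ≤ R}

/-- `A` is `D`-quasiconvex with respect to the coarse median `μ`. -/
def IsCMQuasiconvex {X : Type*} [MetricSpace X] (μ : X → X → X → X) (D : ℝ) (A : Set X) :
    Prop :=
  ∀ a₁ ∈ A, ∀ a₂ ∈ A, cmInterval μ a₁ a₂ ⊆ closedNbhd D A

/-- A metric space is geodesic if any two points are joined by an isometrically embedded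
compact real interval. -/
def IsGeodesicSpace (X : Type*) [MetricSpace X] : Prop :=
  ∀ x y : X, ∃ γ : ℝ → X, γ 0 = x ∧ γ (dist x y) = y ∧
    ∀ s ∈ Set.Icc (0 : ℝ) (dist x y), ∀ t ∈ Set.Icc (0 : ℝ) (dist x y),
      dist (γ s) (γ t) = |s - t|

/-- An `(L, A)`-quasigeodesic from `x` to `y`, defined on the interval `[a, b]`. -/
def IsQuasigeodesicOn {X : Type*} [MetricSpace X] (L A a b : ℝ) (γ : ℝ → X) (x y : X) :
    Prop :=
  a ≤ b ∧ γ a = x ∧ γ b = y ∧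
    ∀ s ∈ Set.Icc a b, ∀ t ∈ Set.Icc a b,
      |s - t| / L - A ≤ dist (γ s) (γ t) ∧ dist (γ s) (γ t) ≤ L * |s - t| + A

/-- The Gromov product `⟨y,z⟩_x`. -/
noncomputable def gromovProd {X : Type*} [MetricSpace X] (x y z : X) : ℝ :=
  (dist x y + dist x z - dist y z) / 2

/-- `X` is `δ`-hyperbolic (four-point condition on Gromov products). -/
def IsDeltaHyperbolic (X : Type*) [MetricSpace X] (δ : ℝ) : Prop :=
  ∀ w x y z : X, min (gromovProd w x y) (gromovProd w y z) ≤ gromovProd w x z + δ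

section CMAux

variable {X : Type u} [MetricSpace X] {C : ℝ} {μ : X → X → X → X}

lemma cm_sym12 (h : IsCoarseMedian C μ) (x y z : X) : μ x y z = μ y x z := h.1 x y z

lemma cm_sym23 (h : IsCoarseMedian C μ) (x y z : X) : μ x y z = μ x z y := h.2.1 x y z

lemma cm_rot (h : IsCoarseMedian C μ) (x y z : X) : μ x y z = μ y z x :=
  (cm_sym12 h x y z).trans (cm_sym23 h y x z)

lemma cm_sym13 (h : IsCoarseMedian C μ) (x y z : X) : μ x y z = μ z y x :=
  (cm_rot h x y z).trans (cm_sym12 h y z x)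

lemma cm_idem' (h : IsCoarseMedian C μ) (x y : X) : μ x y x = x := by
  rw [cm_sym23 h x y x]; exact h.2.2.1 x y

lemma cm1 (h : IsCoarseMedian C μ) (x y z w : X) :
    dist (μ (μ x w y) w z) (μ x w (μ y w z)) ≤ C := h.2.2.2.1 x y z w

lemma cm2 (h : IsCoarseMedian C μ) (x y z w : X) :
    dist (μ x y z) (μ w y z) ≤ C * dist x w + C := h.2.2.2.2 x y z w

lemma cm2_3 (h : IsCoarseMedian C μ) (x y p q : X) :
    dist (μ x y p) (μ x y q) ≤ C * dist p q + C := by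
  rw [cm_sym23 h x y p, cm_sym12 h x p y, cm_sym23 h x y q, cm_sym12 h x q y]
  exact cm2 h p x y q

lemma cm_between (h : IsCoarseMedian C μ) (x y u : X) :
    dist (μ x y (μ x y u)) (μ x y u) ≤ C := by
  have h1 := cm1 h x x u y
  rw [cm_idem' h x y] at h1
  rw [dist_comm]
  exact h1

lemma cm_near (h : IsCoarseMedian C μ) (hC : 1 ≤ C) {x y a : X} {r : ℝ}
    (hr : ∃ u, dist a (μ x y u) ≤ r) :
    dist (μ x y a) a ≤ (C + 1) * r + 2 * C := by
  obtain ⟨u, hu⟩ := hr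
  have h1 : dist (μ x y a) (μ x y (μ x y u)) ≤ C * dist a (μ x y u) + C :=
    cm2_3 h x y a (μ x y u)
  have h2 := cm_between h x y u
  have h3 := dist_triangle4 (μ x y a) (μ x y (μ x y u)) (μ x y u) a
  have h4 : dist (μ x y u) a = dist a (μ x y u) := dist_comm _ _
  have h5 : C * dist a (μ x y u) ≤ C * r :=
    mul_le_mul_of_nonneg_left hu (by linarith)
  linarith

lemma cm_mem_near (h : IsCoarseMedian C μ) {x y a : X} {R : ℝ}
    (ha : a ∈ closedNbhd R (cmInterval μ x y)) :
    ∃ u, dist a (μ x y u) ≤ R + 1 := by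
  have hne : (cmInterval μ x y).Nonempty := ⟨μ x y x, x, rfl⟩
  have ha' : Metric.infDist a (cmInterval μ x y) ≤ R := ha
  have hlt : Metric.infDist a (cmInterval μ x y) < R + 1 := by linarith
  obtain ⟨p, hp, hd⟩ := (Metric.infDist_lt_iff hne).mp hlt
  obtain ⟨u, hu⟩ := hp
  exact ⟨u, by rw [hu]; linarith⟩

lemma cm_helper1 (h : IsCoarseMedian C μ) (hC : 1 ≤ C) {E : ℝ} (u v w p : X)
    (h1 : dist (μ u v p) p ≤ E) (h2 : dist (μ u w p) p ≤ E) :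
    dist (μ (μ u v w) u p) p ≤ (C + 1) * E + 2 * C := by
  have e1 : μ u v w = μ v u w := cm_sym12 h u v w
  have t1 : dist (μ (μ v u w) u p) (μ v u (μ u w p)) ≤ C := by
    have := cm1 h v w p u
    rwa [cm_sym12 h w u p] at this
  have t2 : dist (μ v u (μ u w p)) (μ u v p) ≤ C * E + C := by
    have t := cm2_3 h v u (μ u w p) p
    rw [cm_sym12 h v u p] at t
    have hd : C * dist (μ u w p) p ≤ C * E :=
      mul_le_mul_of_nonneg_left h2 (by linarith)
    linarith
  have t4 := dist_triangle4 (μ (μ v u w) u p) (μ v u (μ u w p)) (μ u v p) p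
  rw [e1]
  linarith

lemma cm_helper2 (h : IsCoarseMedian C μ) (hC : 1 ≤ C) {F : ℝ} (m y b a : X)
    (h1 : dist (μ m y b) b ≤ F) :
    dist (μ (μ a m b) m y) (μ a m b) ≤ C * F + 2 * C := by
  have t1 : dist (μ (μ a m b) m y) (μ a m (μ b m y)) ≤ C := cm1 h a b y m
  have e1 : μ b m y = μ m y b := by
    rw [cm_sym12 h b m y, cm_sym23 h m b y]
  rw [e1] at t1
  have t2 : dist (μ a m (μ m y b)) (μ a m b) ≤ C * F + C := by
    have t := cm2_3 h a m (μ m y b) b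
    have hd : C * dist (μ m y b) b ≤ C * F :=
      mul_le_mul_of_nonneg_left h1 (by linarith)
    linarith
  have t3 := dist_triangle (μ (μ a m b) m y) (μ a m (μ m y b)) (μ a m b)
  linarith

lemma cm_helper3 (h : IsCoarseMedian C μ) (hC : 1 ≤ C) {G C' : ℝ} (q m u v : X)
    (g1 : dist (μ q m u) q ≤ G) (g2 : dist (μ q m v) q ≤ G)
    (h3 : dist (μ u v m) m ≤ C') :
    dist q m ≤ (C + 1) * G + C * C' + 3 * C := by
  have t1 : dist q (μ q m v) ≤ G := by rw [dist_comm]; exact g2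
  have t2 : dist (μ q m v) (μ (μ q m u) m v) ≤ C * G + C := by
    have t := cm2 h q m v (μ q m u)
    have hd : C * dist q (μ q m u) ≤ C * G := by
      rw [dist_comm q (μ q m u)]
      exact mul_le_mul_of_nonneg_left g1 (by linarith)
    linarith
  have t3 : dist (μ (μ q m u) m v) (μ q m (μ u m v)) ≤ C := cm1 h q u v m
  have t4 : dist (μ q m (μ u m v)) m ≤ C * C' + C := by
    have e1 : μ u m v = μ u v m := cm_sym23 h u m v
    have e2 : μ q m m = m := by rw [cm_sym12 h q m m]; exact cm_idem' h m q
    rw [e1]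
    have t := cm2_3 h q m (μ u v m) m
    rw [e2] at t
    have hd : C * dist (μ u v m) m ≤ C * C' :=
      mul_le_mul_of_nonneg_left h3 (by linarith)
    linarith
  have d4 := dist_triangle4 q (μ q m v) (μ (μ q m u) m v) (μ q m (μ u m v))
  have d2 := dist_triangle q (μ q m (μ u m v)) m
  linarith

lemma cm_helper4 (h : IsCoarseMedian C μ) (hC : 1 ≤ C) {e : ℝ} (M A B D : X)
    (h1 : dist (μ M A B) M ≤ e) (h2 : dist (μ M A D) M ≤ e) :
    dist (μ M A (μ A B D)) M ≤ (C + 1) * e + 2 * C := by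
  have t1 : dist (μ M A (μ A B D)) (μ (μ M A B) A D) ≤ C := by
    have t := cm1 h M B D A
    rw [cm_sym12 h B A D] at t
    rw [dist_comm] at t
    exact t
  have t2 : dist (μ (μ M A B) A D) (μ M A D) ≤ C * e + C := by
    have t := cm2 h (μ M A B) A D M
    have hd : C * dist (μ M A B) M ≤ C * e :=
      mul_le_mul_of_nonneg_left h1 (by linarith)
    linarith
  have t3 := dist_triangle4 (μ M A (μ A B D)) (μ (μ M A B) A D) (μ M A D) M
  linarith

end CMAux

set_option maxHeartbeats 1600000 in
/-- Lemma 2.2(5): a coarse median of points near the three pairwise intervals is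
uniformly close to the coarse median of the three original points. -/
theorem median_of_nearby_points_close :
    ∀ C : ℝ, 1 ≤ C → ∃ K : ℝ, 1 ≤ K ∧
      ∀ (X : Type u) [MetricSpace X], ∀ μ : X → X → X → X, IsCoarseMedian C μ →
        ∀ (x y z : X) (R : ℝ), 0 ≤ R → ∀ a b c : X,
          a ∈ closedNbhd R (cmInterval μ x y) → a ∈ closedNbhd R (cmInterval μ x z) →
          b ∈ closedNbhd R (cmInterval μ y z) → b ∈ closedNbhd R (cmInterval μ y x) →
          c ∈ closedNbhd R (cmInterval μ z x) → c ∈ closedNbhd R (cmInterval μ z y) →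
            dist (μ a b c) (μ x y z) ≤ K * R + K := by
  intro C hC
  have hD : (2:ℝ) ≤ C + 1 := by linarith
  have hD0 : (0:ℝ) ≤ C + 1 := by linarith
  refine ⟨17 * (C + 1) ^ 6, ?_, ?_⟩
  · have h1 : (1:ℝ) ≤ (C + 1) ^ 6 := one_le_pow₀ (by linarith)
    linarith
  intro X _ μ hμ x y z R hR a b c ha1 ha2 hb1 hb2 hc1 hc2
  set S := (C + 1) * (R + 1) with hSdef
  have hS : 2 ≤ S := by nlinarith
  have hS0 : 0 ≤ S := by linarith
  -- Step 1: E-bounds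
  have key : ∀ (u v : X) (w : X), w ∈ closedNbhd R (cmInterval μ u v) →
      dist (μ u v w) w ≤ 3 * S := by
    intro u v w hw
    have h1 := cm_near hμ hC (cm_mem_near hμ hw)
    have h2 : (C + 1) * (R + 1) + 2 * C ≤ 3 * S := by nlinarith
    linarith
  have hEa1 := key x y a ha1
  have hEa2 := key x z a ha2
  have hEb1 := key y z b hb1
  have hEb2 := key y x b hb2
  have hEc1 := key z x c hc1
  have hEc2 := key z y c hc2
  -- Step 2: F-bounds  dist (μ (μ x y z) w p) p ≤ 5 (C+1) S
  have arithF : (C + 1) * (3 * S) + 2 * C ≤ 5 * ((C + 1) * S) := by nlinarith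
  have hFa : dist (μ (μ x y z) x a) a ≤ 5 * ((C + 1) * S) :=
    le_trans (cm_helper1 hμ hC x y z a hEa1 hEa2) arithF
  have hFb : dist (μ (μ x y z) y b) b ≤ 5 * ((C + 1) * S) := by
    have t := le_trans (cm_helper1 hμ hC y z x b hEb1 hEb2) arithF
    rwa [show μ y z x = μ x y z from (cm_rot hμ x y z).symm] at t
  have hFc : dist (μ (μ x y z) z c) c ≤ 5 * ((C + 1) * S) := by
    have t := le_trans (cm_helper1 hμ hC z x y c hEc1 hEc2) arithF
    rwa [show μ z x y = μ x y z from (cm_rot hμ z x y)] at t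
  -- Step 3: G-bounds via helper2
  have arithG : C * (5 * ((C + 1) * S)) + 2 * C ≤ 7 * ((C + 1) ^ 2 * S) := by nlinarith
  -- pair (a,b)
  have gab1 : dist (μ (μ a (μ x y z) b) (μ x y z) x) (μ a (μ x y z) b)
      ≤ 7 * ((C + 1) ^ 2 * S) := by
    have t := le_trans (cm_helper2 hμ hC (μ x y z) x a b hFa) arithG
    rwa [cm_sym13 hμ b (μ x y z) a] at t
  have gab2 : dist (μ (μ a (μ x y z) b) (μ x y z) y) (μ a (μ x y z) b)
      ≤ 7 * ((C + 1) ^ 2 * S) :=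
    le_trans (cm_helper2 hμ hC (μ x y z) y b a hFb) arithG
  -- pair (b,c)
  have gbc1 : dist (μ (μ b (μ x y z) c) (μ x y z) y) (μ b (μ x y z) c)
      ≤ 7 * ((C + 1) ^ 2 * S) := by
    have t := le_trans (cm_helper2 hμ hC (μ x y z) y b c hFb) arithG
    rwa [cm_sym13 hμ c (μ x y z) b] at t
  have gbc2 : dist (μ (μ b (μ x y z) c) (μ x y z) z) (μ b (μ x y z) c)
      ≤ 7 * ((C + 1) ^ 2 * S) :=
    le_trans (cm_helper2 hμ hC (μ x y z) z c b hFc) arithG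
  -- pair (a,c)
  have gac1 : dist (μ (μ a (μ x y z) c) (μ x y z) x) (μ a (μ x y z) c)
      ≤ 7 * ((C + 1) ^ 2 * S) := by
    have t := le_trans (cm_helper2 hμ hC (μ x y z) x a c hFa) arithG
    rwa [cm_sym13 hμ c (μ x y z) a] at t
  have gac2 : dist (μ (μ a (μ x y z) c) (μ x y z) z) (μ a (μ x y z) c)
      ≤ 7 * ((C + 1) ^ 2 * S) :=
    le_trans (cm_helper2 hμ hC (μ x y z) z c a hFc) arithG
  -- betweenness of m in the original intervals
  have hxy : dist (μ x y (μ x y z)) (μ x y z) ≤ C := cm_between hμ x y z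
  have hyz : dist (μ y z (μ x y z)) (μ x y z) ≤ C := by
    have t := cm_between hμ y z x
    rwa [show μ y z x = μ x y z from (cm_rot hμ x y z).symm] at t
  have hxz : dist (μ x z (μ x y z)) (μ x y z) ≤ C := by
    have t := cm_between hμ x z y
    rwa [show μ x z y = μ x y z from (cm_sym23 hμ x y z).symm] at t
  -- Step 4: ε-bounds via helper3
  have p3 : (0:ℝ) ≤ (C + 1) ^ 3 := by positivity
  have p4 : (0:ℝ) ≤ (C + 1) ^ 4 := by positivity
  have p5 : (0:ℝ) ≤ (C + 1) ^ 5 := by positivity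
  have m3 : (C + 1) ^ 3 * 2 ≤ (C + 1) ^ 3 * S := mul_le_mul_of_nonneg_left hS p3
  have m4 : (C + 1) ^ 4 * 2 ≤ (C + 1) ^ 4 * S := mul_le_mul_of_nonneg_left hS p4
  have m5 : (C + 1) ^ 5 * 2 ≤ (C + 1) ^ 5 * S := mul_le_mul_of_nonneg_left hS p5
  have q3 : C * C + 3 * C ≤ 2 * (C + 1) ^ 3 := by nlinarith
  have q4 : C ≤ (C + 1) ^ 4 := by nlinarith
  have q5 : C * C + 3 * C ≤ 2 * (C + 1) ^ 5 := by nlinarith [p3, sq_nonneg (C+1)]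
  have arithE : (C + 1) * (7 * ((C + 1) ^ 2 * S)) + C * C + 3 * C
      ≤ 11 * ((C + 1) ^ 3 * S) := by nlinarith [m3, q3, p3]
  have hab : dist (μ (μ x y z) a b) (μ x y z) ≤ 11 * ((C + 1) ^ 3 * S) := by
    have t := le_trans (cm_helper3 hμ hC (μ a (μ x y z) b) (μ x y z) x y gab1 gab2 hxy) arithE
    rwa [cm_sym12 hμ a (μ x y z) b] at t
  have hbc : dist (μ (μ x y z) b c) (μ x y z) ≤ 11 * ((C + 1) ^ 3 * S) := by
    have t := le_trans (cm_helper3 hμ hC (μ b (μ x y z) c) (μ x y z) y z gbc1 gbc2 hyz) arithE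
    rwa [cm_sym12 hμ b (μ x y z) c] at t
  have hac : dist (μ (μ x y z) a c) (μ x y z) ≤ 11 * ((C + 1) ^ 3 * S) := by
    have t := le_trans (cm_helper3 hμ hC (μ a (μ x y z) c) (μ x y z) x z gac1 gac2 hxz) arithE
    rwa [cm_sym12 hμ a (μ x y z) c] at t
  -- Step 5: ε₁-bounds via helper4
  have arithE1 : (C + 1) * (11 * ((C + 1) ^ 3 * S)) + 2 * C
      ≤ 13 * ((C + 1) ^ 4 * S) := by nlinarith [m4, q4, p4]
  have hba : dist (μ (μ x y z) b a) (μ x y z) ≤ 11 * ((C + 1) ^ 3 * S) := by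
    rwa [cm_sym23 hμ (μ x y z) a b] at hab
  have he1a : dist (μ (μ x y z) (μ a b c) a) (μ x y z) ≤ 13 * ((C + 1) ^ 4 * S) := by
    have t := le_trans (cm_helper4 hμ hC (μ x y z) a b c hab hac) arithE1
    rwa [cm_sym23 hμ (μ x y z) a (μ a b c)] at t
  have he1b : dist (μ (μ x y z) (μ a b c) b) (μ x y z) ≤ 13 * ((C + 1) ^ 4 * S) := by
    have t := le_trans (cm_helper4 hμ hC (μ x y z) b a c hba hbc) arithE1
    rw [show μ b a c = μ a b c from cm_sym12 hμ b a c] at t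
    rwa [cm_sym23 hμ (μ x y z) b (μ a b c)] at t
  -- Step 6: conclusion via helper3
  have habm : dist (μ a b (μ a b c)) (μ a b c) ≤ C := cm_between hμ a b c
  have final := cm_helper3 hμ hC (μ x y z) (μ a b c) a b he1a he1b habm
  have arithFin : (C + 1) * (13 * ((C + 1) ^ 4 * S)) + C * C + 3 * C
      ≤ 17 * ((C + 1) ^ 5 * S) := by nlinarith [m5, q5, p5]
  have hKS : 17 * ((C + 1) ^ 5 * S) = 17 * (C + 1) ^ 6 * R + 17 * (C + 1) ^ 6 := by
    rw [hSdef]; ring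
  rw [dist_comm]
  calc dist (μ x y z) (μ a b c) ≤ (C + 1) * (13 * ((C + 1) ^ 4 * S)) + C * C + 3 * C := final
    _ ≤ 17 * ((C + 1) ^ 5 * S) := arithFin
    _ = 17 * (C + 1) ^ 6 * R + 17 * (C + 1) ^ 6 := hKS
end

section
/- Let (X, μ) be a C-coarse median space for some C ≥ 1, let D ≥ 0, let A ⊆ X be a nonempty D-quasiconvex subset, and let B ⊆ X be a nonempty subset whose Hausdorff distance from A is at most D. Then B is 2(C·D + C + D)-quasiconvex. -/
open Metric Set

universe u

/-- Lemma 2.2(6): a set at Hausdorff distance at most `D` from a `D`-quasiconvex set is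
`2(CD + C + D)`-quasiconvex. -/
theorem quasiconvex_of_hausdorff_close {X : Type*} [MetricSpace X]
    (C D : ℝ) (hC : 1 ≤ C) (hD : 0 ≤ D)
    (μ : X → X → X → X) (hμ : IsCoarseMedian C μ)
    (A B : Set X) (hA : A.Nonempty) (hB : B.Nonempty)
    (hAqc : IsCMQuasiconvex μ D A)
    (hAB : A ⊆ closedNbhd D B) (hBA : B ⊆ closedNbhd D A) :
    IsCMQuasiconvex μ (2 * (C * D + C + D)) B := by
  obtain ⟨hcomm1, hcomm2, hidem, hcm1, hcm2⟩ := hμ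
  intro b₁ hb₁ b₂ hb₂ w hw
  obtain ⟨z, hz⟩ := hw
  have hC0 : (0:ℝ) < C := lt_of_lt_of_le one_pos hC
  show Metric.infDist w B ≤ 2 * (C * D + C + D)
  refine le_of_forall_pos_le_add ?_
  intro ε hε
  have hε4 : 0 < ε / (2 * C + 2) := by positivity
  -- pick a₁ near b₁
  have h1 : Metric.infDist b₁ A < D + ε / (2 * C + 2) :=
    lt_of_le_of_lt (hBA hb₁) (by linarith)
  obtain ⟨a₁, ha₁, hd₁⟩ := (Metric.infDist_lt_iff hA).mp h1
  have h2 : Metric.infDist b₂ A < D + ε / (2 * C + 2) :=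
    lt_of_le_of_lt (hBA hb₂) (by linarith)
  obtain ⟨a₂, ha₂, hd₂⟩ := (Metric.infDist_lt_iff hA).mp h2
  -- μ a₁ a₂ z is in [a₁,a₂]
  have hmem : μ a₁ a₂ z ∈ cmInterval μ a₁ a₂ := ⟨z, rfl⟩
  have h3 : Metric.infDist (μ a₁ a₂ z) A ≤ D := hAqc a₁ ha₁ a₂ ha₂ hmem
  have h3' : Metric.infDist (μ a₁ a₂ z) A < D + ε / (2 * C + 2) :=
    lt_of_le_of_lt h3 (by linarith)
  obtain ⟨a, ha, hda⟩ := (Metric.infDist_lt_iff hA).mp h3'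
  have h4 : Metric.infDist a B < D + ε / (2 * C + 2) :=
    lt_of_le_of_lt (hAB ha) (by linarith)
  obtain ⟨b, hb, hdb⟩ := (Metric.infDist_lt_iff hB).mp h4
  -- estimate dist w (μ a₁ a₂ z)
  have e1 : dist (μ b₁ b₂ z) (μ a₁ b₂ z) ≤ C * dist b₁ a₁ + C := hcm2 b₁ b₂ z a₁
  have e2 : dist (μ a₁ b₂ z) (μ a₁ a₂ z) ≤ C * dist b₂ a₂ + C := by
    have := hcm2 b₂ a₁ z a₂
    rwa [hcomm1 b₂ a₁ z, hcomm1 a₂ a₁ z] at this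
  have key : dist w b ≤ 2 * (C * D + C + D) + ε := by
    have t1 : dist (μ b₁ b₂ z) b ≤ dist (μ b₁ b₂ z) (μ a₁ b₂ z)
        + dist (μ a₁ b₂ z) (μ a₁ a₂ z) + dist (μ a₁ a₂ z) a + dist a b :=
      by
        calc dist (μ b₁ b₂ z) b ≤ dist (μ b₁ b₂ z) (μ a₁ a₂ z) + dist (μ a₁ a₂ z) a + dist a b :=
            dist_triangle4 _ _ _ _
          _ ≤ _ := by
            have := dist_triangle (μ b₁ b₂ z) (μ a₁ b₂ z) (μ a₁ a₂ z)
            linarith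
    have hC1 : C * dist b₁ a₁ ≤ C * (D + ε / (2 * C + 2)) :=
      mul_le_mul_of_nonneg_left (le_of_lt hd₁) (le_of_lt hC0)
    have hC2 : C * dist b₂ a₂ ≤ C * (D + ε / (2 * C + 2)) :=
      mul_le_mul_of_nonneg_left (le_of_lt hd₂) (le_of_lt hC0)
    have harith : C * (D + ε / (2 * C + 2)) + C + (C * (D + ε / (2 * C + 2)) + C)
        + (D + ε / (2 * C + 2)) + (D + ε / (2 * C + 2)) ≤ 2 * (C * D + C + D) + ε := by
      have h2C : (0:ℝ) < 2 * C + 2 := by linarith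
      have hx : ε / (2 * C + 2) * (2 * C + 2) = ε := div_mul_cancel₀ ε h2C.ne'
      nlinarith [hx]
    rw [← hz]
    calc dist (μ b₁ b₂ z) b ≤ _ := t1
      _ ≤ C * (D + ε / (2 * C + 2)) + C + (C * (D + ε / (2 * C + 2)) + C)
          + (D + ε / (2 * C + 2)) + (D + ε / (2 * C + 2)) := by linarith
      _ ≤ 2 * (C * D + C + D) + ε := harith
  calc Metric.infDist w B ≤ dist w b := Metric.infDist_le_dist_of_mem hb
    _ ≤ 2 * (C * D + C + D) + ε := key
end

section
/- Let (X, μ) be a C-coarse median space for some C ≥ 1, where X is a geodesic metric space. Then for any x, y ∈ X, there exists a (2C, 4C)-quasigeodesic from x to y whose image is contained in the interval [x,y]_μ. -/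
open Metric Set

universe u

/-- A chain of points in a set `S` with consecutive steps of size at most `c`. -/
def cmChain {X : Type*} [MetricSpace X] (S : Set X) (c : ℝ) (u v : X) (n : ℕ)
    (p : ℕ → X) : Prop :=
  p 0 = u ∧ p n = v ∧ (∀ i, i < n → dist (p i) (p (i + 1)) ≤ c) ∧ ∀ i, i ≤ n → p i ∈ S

lemma cmChain_dist_le {X : Type*} [MetricSpace X] {S : Set X} {c : ℝ}
    {u v : X} {n : ℕ} {p : ℕ → X} (h : cmChain S c u v n p) :
    ∀ i j, i ≤ j → j ≤ n → dist (p i) (p j) ≤ c * ((j : ℝ) - (i : ℝ)) := by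
  intro i j hij
  induction j, hij using Nat.le_induction with
  | base => intro _; simp
  | succ j hij ih =>
    intro hjn
    have h2 := h.2.2.1 j (by omega)
    have h3 := ih (by omega)
    have h4 := dist_triangle (p i) (p j) (p (j + 1))
    push_cast
    push_cast at h3
    linarith

lemma cmChain_append {X : Type*} [MetricSpace X] {S : Set X} {c : ℝ} {u w v : X}
    {n₁ n₂ : ℕ} {p q : ℕ → X} (h₁ : cmChain S c u w n₁ p) (h₂ : cmChain S c w v n₂ q) :
    ∃ r, cmChain S c u v (n₁ + n₂) r := by
  obtain ⟨hp0, hpn, hps, hpm⟩ := h₁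
  obtain ⟨hq0, hqn, hqs, hqm⟩ := h₂
  refine ⟨fun k => if k ≤ n₁ then p k else q (k - n₁), ?_, ?_, ?_, ?_⟩
  · simp [hp0]
  · by_cases h : n₁ + n₂ ≤ n₁
    · have hn2 : n₂ = 0 := by omega
      subst hn2
      simp only [Nat.add_zero, if_pos le_rfl]
      rw [hpn, ← hq0]
      exact hqn
    · simp only [if_neg h, Nat.add_sub_cancel_left]
      exact hqn
  · intro k hk
    by_cases ha : k + 1 ≤ n₁
    · have hb : k ≤ n₁ := by omega
      simp only [if_pos ha, if_pos hb]
      exact hps k (by omega)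
    · by_cases hb : k ≤ n₁
      · have hk1 : k = n₁ := by omega
        subst hk1
        simp only [if_pos le_rfl, if_neg ha]
        rw [hpn, show k + 1 - k = 1 by omega, ← hq0]
        exact hqs 0 (by omega)
      · simp only [if_neg ha, if_neg hb]
        rw [show k + 1 - n₁ = (k - n₁) + 1 by omega]
        exact hqs (k - n₁) (by omega)
  · intro k hk
    by_cases hb : k ≤ n₁
    · simp only [if_pos hb]; exact hpm k hb
    · simp only [if_neg hb]; exact hqm (k - n₁) (by omega)

/-- Coarse connectivity of the image of a coarse-Lipschitz retraction in a geodesic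
space: any two points of `S` are joined by a `2C`-chain in `S` of length at most
`dist u v + 3`. -/
lemma cmChain_exists {X : Type*} [MetricSpace X] (hgeo : IsGeodesicSpace X)
    {C : ℝ} (hC : 1 ≤ C) {S : Set X} {f : X → X}
    (hfS : ∀ z, f z ∈ S)
    (hlip : ∀ z z', dist (f z) (f z') ≤ C * dist z z' + C)
    (hidem : ∀ w, w ∈ S → dist (f w) w ≤ C)
    (u v : X) (hu : u ∈ S) (hv : v ∈ S) :
    ∃ (n : ℕ) (p : ℕ → X), cmChain S (2 * C) u v n p ∧ (n : ℝ) ≤ dist u v + 3 := by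
  obtain ⟨δ, hδ0, hδe, hδiso⟩ := hgeo u v
  have he0 : (0 : ℝ) ≤ dist u v := dist_nonneg
  have hC0 : (0 : ℝ) < C := lt_of_lt_of_le one_pos hC
  set e := dist u v with he
  set N := ⌈e⌉₊ with hN
  have hNe : e ≤ (N : ℝ) := Nat.le_ceil e
  refine ⟨N + 2, fun i => if i = 0 then u else if i = N + 2 then v
      else f (δ (min ((i : ℝ) - 1) e)), ⟨?_, ?_, ?_, ?_⟩, ?_⟩
  · simp
  · simp
  · intro i hi
    simp only []
    split_ifs with h0 ha hb hc hd h1 he' h3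
    · exact ha.elim
    · omega
    · -- first step: from u to f (δ 0)
      subst h0
      rw [show ((0 + 1 : ℕ) : ℝ) - 1 = 0 by push_cast; ring, min_eq_left he0, hδ0,
        dist_comm]
      have := hidem u hu
      linarith
    · omega
    · omega
    · omega
    · exact he'.elim
    · -- last step: from f (δ e) to v
      have hNi : i = N + 1 := by omega
      subst hNi
      rw [show ((N + 1 : ℕ) : ℝ) - 1 = (N : ℝ) by push_cast; ring, min_eq_right hNe, hδe]
      have := hidem v hv
      linarith
    · -- middle step
      have hi1 : (1 : ℝ) ≤ (i : ℝ) := by exact_mod_cast Nat.one_le_iff_ne_zero.mpr h0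
      have hs1mem : min ((i : ℝ) - 1) e ∈ Set.Icc (0 : ℝ) e :=
        ⟨le_min (by linarith) he0, min_le_right _ _⟩
      have hcast : ((i + 1 : ℕ) : ℝ) - 1 = (i : ℝ) := by push_cast; ring
      rw [hcast]
      have hs2mem : min ((i : ℝ)) e ∈ Set.Icc (0 : ℝ) e :=
        ⟨le_min (by linarith) he0, min_le_right _ _⟩
      have hiso := hδiso _ hs1mem _ hs2mem
      have habs : |min ((i : ℝ) - 1) e - min ((i : ℝ)) e| ≤ 1 := by
        refine le_trans (abs_min_sub_min_le_max _ _ _ _) ?_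
        rw [show (i : ℝ) - 1 - (i : ℝ) = -1 by ring, sub_self, abs_neg, abs_one, abs_zero]
        simp
      calc dist (f (δ (min ((i : ℝ) - 1) e))) (f (δ (min ((i : ℝ)) e)))
          ≤ C * dist (δ (min ((i : ℝ) - 1) e)) (δ (min ((i : ℝ)) e)) + C := hlip _ _
        _ = C * |min ((i : ℝ) - 1) e - min ((i : ℝ)) e| + C := by rw [hiso]
        _ ≤ C * 1 + C := by
            have := mul_le_mul_of_nonneg_left habs hC0.le
            linarith
        _ ≤ 2 * C := by linarith
  · intro i _
    simp only []
    split_ifs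
    · exact hu
    · exact hv
    · exact hfS _
  · have := Nat.ceil_lt_add_one he0
    push_cast
    linarith

/-- Lemma 3.1: in a geodesic coarse median space, each interval `[x,y]_μ` contains a
`(2C, 4C)`-quasigeodesic from `x` to `y`. -/
theorem quasigeodesic_in_interval {X : Type*} [MetricSpace X]
    (hgeo : IsGeodesicSpace X) (C : ℝ) (hC : 1 ≤ C)
    (μ : X → X → X → X) (hμ : IsCoarseMedian C μ) (x y : X) :
    ∃ (a b : ℝ) (γ : ℝ → X), IsQuasigeodesicOn (2 * C) (4 * C) a b γ x y ∧
      γ '' Set.Icc a b ⊆ cmInterval μ x y := by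
  classical
  obtain ⟨hs1, hs2, hid, hcm1, hcm2⟩ := hμ
  have hC0 : (0 : ℝ) < C := lt_of_lt_of_le one_pos hC
  have hxx : μ x y x = x := by rw [hs2, hid]
  have hyy : μ x y y = y := by rw [hs1, hs2, hid]
  have hπS : ∀ z : X, μ x y z ∈ cmInterval μ x y := fun z => ⟨z, rfl⟩
  have hlip : ∀ z z' : X, dist (μ x y z) (μ x y z') ≤ C * dist z z' + C := by
    intro z z'
    have h1 : ∀ w : X, μ x y w = μ w y x := by
      intro w; rw [hs1, hs2, hs1]
    rw [h1 z, h1 z']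
    exact hcm2 z y x z'
  have hidem : ∀ w : X, w ∈ cmInterval μ x y → dist (μ x y w) w ≤ C := by
    rintro w ⟨z, rfl⟩
    have h := hcm1 x x z y
    rw [hxx] at h
    rw [dist_comm]
    exact h
  set SS : Set ℕ := {n | ∃ p : ℕ → X, cmChain (cmInterval μ x y) (2 * C) x y n p} with hSSdef
  have hne : SS.Nonempty := by
    obtain ⟨n, p, hc, -⟩ := cmChain_exists hgeo hC hπS hlip hidem x y ⟨x, hxx⟩ ⟨y, hyy⟩
    exact ⟨n, p, hc⟩
  obtain ⟨p, hp⟩ := Nat.sInf_mem hne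
  set n₀ := sInf SS with hn₀
  obtain ⟨hp0, hpn, hpstep, hpmem⟩ := hp
  -- lower bound along the minimal chain
  have hlow : ∀ i j, i ≤ j → j ≤ n₀ → (j : ℝ) - (i : ℝ) - 3 ≤ dist (p i) (p j) := by
    intro i j hij hj
    obtain ⟨m, q, hq, hm⟩ := cmChain_exists hgeo hC hπS hlip hidem (p i) (p j)
      (hpmem i (hij.trans hj)) (hpmem j hj)
    have c1 : cmChain (cmInterval μ x y) (2 * C) x (p i) i p :=
      ⟨hp0, rfl, fun k hk => hpstep k (by omega), fun k hk => hpmem k (by omega)⟩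
    have c3 : cmChain (cmInterval μ x y) (2 * C) (p j) y (n₀ - j) (fun k => p (j + k)) :=
      ⟨rfl, by show p (j + (n₀ - j)) = y; rw [show j + (n₀ - j) = n₀ by omega]; exact hpn,
       fun k hk => hpstep (j + k) (by omega), fun k hk => hpmem (j + k) (by omega)⟩
    obtain ⟨r1, hr1⟩ := cmChain_append c1 hq
    obtain ⟨r2, hr2⟩ := cmChain_append hr1 c3
    have hmin : n₀ ≤ i + m + (n₀ - j) := Nat.sInf_le ⟨r2, hr2⟩
    have hjm : j ≤ i + m := by omega
    have hjm' : (j : ℝ) ≤ (i : ℝ) + (m : ℝ) := by exact_mod_cast hjm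
    linarith
  -- index helper for the step-function parametrisation
  have hidx : ∀ s : ℝ, s ∈ Set.Icc (0 : ℝ) (2 * (n₀ : ℝ)) →
      ⌊s / 2 + 1 / 2⌋₊ ≤ n₀ ∧ ((⌊s / 2 + 1 / 2⌋₊ : ℝ) ≤ s / 2 + 1 / 2 ∧
        s / 2 - 1 / 2 < (⌊s / 2 + 1 / 2⌋₊ : ℝ)) := by
    intro s hs
    have h0 : (0 : ℝ) ≤ s / 2 + 1 / 2 := by linarith [hs.1]
    have h1 := Nat.floor_le h0
    have h2 := Nat.lt_floor_add_one (s / 2 + 1 / 2)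
    refine ⟨?_, h1, by linarith⟩
    have h3 : (⌊s / 2 + 1 / 2⌋₊ : ℝ) < (n₀ : ℝ) + 1 := by
      have := hs.2; linarith
    have h4 : ⌊s / 2 + 1 / 2⌋₊ < n₀ + 1 := by exact_mod_cast h3
    omega
  refine ⟨0, 2 * (n₀ : ℝ), fun t => p ⌊t / 2 + 1 / 2⌋₊, ⟨by positivity, ?_, ?_, ?_⟩, ?_⟩
  · show p ⌊(0 : ℝ) / 2 + 1 / 2⌋₊ = x
    rw [show (0 : ℝ) / 2 + 1 / 2 = 1 / 2 by norm_num,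
      Nat.floor_eq_zero.mpr (by norm_num : (1 / 2 : ℝ) < 1)]
    exact hp0
  · show p ⌊2 * (n₀ : ℝ) / 2 + 1 / 2⌋₊ = y
    rw [show 2 * (n₀ : ℝ) / 2 + 1 / 2 = (n₀ : ℝ) + 1 / 2 by ring]
    have : ⌊(n₀ : ℝ) + 1 / 2⌋₊ = n₀ := by
      rw [Nat.floor_eq_iff (by positivity)]
      constructor <;> [linarith; linarith]
    rw [this]
    exact hpn
  · intro s hs t ht
    obtain ⟨hiN, hi1, hi2⟩ := hidx s hs
    obtain ⟨hjN, hj1, hj2⟩ := hidx t ht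
    set i := ⌊s / 2 + 1 / 2⌋₊ with hidef
    set j := ⌊t / 2 + 1 / 2⌋₊ with hjdef
    show |s - t| / (2 * C) - 4 * C ≤ dist (p i) (p j) ∧
      dist (p i) (p j) ≤ 2 * C * |s - t| + 4 * C
    have habs1 : |(i : ℝ) - (j : ℝ)| ≤ |s - t| / 2 + 1 := by
      rcases abs_cases ((i : ℝ) - (j : ℝ)) with ⟨h1, h1'⟩ | ⟨h1, h1'⟩ <;>
        rcases abs_cases (s - t) with ⟨h3, h3'⟩ | ⟨h3, h3'⟩ <;> linarith
    have habs2 : |s - t| / 2 - 1 ≤ |(i : ℝ) - (j : ℝ)| := by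
      rcases abs_cases ((i : ℝ) - (j : ℝ)) with ⟨h1, h1'⟩ | ⟨h1, h1'⟩ <;>
        rcases abs_cases (s - t) with ⟨h3, h3'⟩ | ⟨h3, h3'⟩ <;> linarith
    have hdub : dist (p i) (p j) ≤ 2 * C * |(i : ℝ) - (j : ℝ)| := by
      rcases le_total i j with h | h
      · have h5 := cmChain_dist_le ⟨hp0, hpn, hpstep, hpmem⟩ i j h hjN
        have h6 : (j : ℝ) - (i : ℝ) ≤ |(i : ℝ) - (j : ℝ)| := by
          rw [abs_sub_comm]; exact le_abs_self _
        have := mul_le_mul_of_nonneg_left h6 (by linarith : (0 : ℝ) ≤ 2 * C)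
        linarith
      · have h5 := cmChain_dist_le ⟨hp0, hpn, hpstep, hpmem⟩ j i h hiN
        have h6 : (i : ℝ) - (j : ℝ) ≤ |(i : ℝ) - (j : ℝ)| := le_abs_self _
        have := mul_le_mul_of_nonneg_left h6 (by linarith : (0 : ℝ) ≤ 2 * C)
        rw [dist_comm] at h5
        linarith
    have hdlb : |(i : ℝ) - (j : ℝ)| - 3 ≤ dist (p i) (p j) := by
      rcases le_total i j with h | h
      · have h5 := hlow i j h hjN
        have hc : (i : ℝ) ≤ (j : ℝ) := by exact_mod_cast h
        rw [abs_of_nonpos (by linarith)]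
        linarith
      · have h5 := hlow j i h hiN
        have hc : (j : ℝ) ≤ (i : ℝ) := by exact_mod_cast h
        rw [abs_of_nonneg (by linarith), dist_comm]
        linarith
    constructor
    · have h2C : |s - t| / (2 * C) ≤ |s - t| / 2 := by
        rw [div_le_div_iff₀ (by linarith) (by norm_num)]
        nlinarith [abs_nonneg (s - t)]
      linarith
    · have h7 := mul_le_mul_of_nonneg_left habs1 (by linarith : (0 : ℝ) ≤ 2 * C)
      have h8 : (0 : ℝ) ≤ C * |s - t| := mul_nonneg hC0.le (abs_nonneg _)
      nlinarith
  · rintro w ⟨t, ht, rfl⟩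
    obtain ⟨hjN, -, -⟩ := hidx t ht
    exact hpmem _ hjN
end

section
/- For all C ≥ 1 and L ≥ 1 there exists L' ≥ 1 (depending only on C and L) such that the following holds. Let (X, μ) be a C-coarse median space, where X is a geodesic metric space. Let x, y ∈ X and p ∈ [x,y]_μ. Let α : [0, s] → X be an (L, L)-quasigeodesic from x to p with image contained in [x,p]_μ, and let β : [0, t] → X be an (L, L)-quasigeodesic from p to y with image contained in [p,y]_μ. Then the concatenation η : [0, s + t] → X, defined by η(r) = α(r) for r ∈ [0, s] and η(r) = β(r − s) for r ∈ [s, s + t], is an (L', L')-quasigeodesic from x to y. -/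
open Metric Set

universe u

/-!
A point `p ∈ [x,y]_μ` lies coarsely between any `a ∈ [x,p]_μ` and `b ∈ [p,y]_μ`: coarse
associativity shows that the median `μ(a,p,b)` is uniformly close to `p`, while it is within
`C·dist(a,b) + C` of both `a` and `b`. Hence `dist(a,p) + dist(p,b) ≤ K·dist(a,b) + K` with `K`
depending only on `C`. Along the concatenation, this inequality carries the lower quasigeodesic
bound across the junction point `p`; the upper bound is the triangle inequality.
-/

section Quasigeodesic

variable {X : Type*} [MetricSpace X]

lemma quasi_bounds_mono {L L' D d : ℝ} (hL : 0 < L) (hLL' : L ≤ L') (hD : 0 ≤ D)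
    (h : D / L - L ≤ d ∧ d ≤ L * D + L) : D / L' - L' ≤ d ∧ d ≤ L' * D + L' := by
  have hdiv : D / L' ≤ D / L := div_le_div_of_nonneg_left hD hL hLL'
  have hmul : L * D ≤ L' * D := mul_le_mul_of_nonneg_right hLL' hD
  exact ⟨by linarith [h.1], by linarith [h.2]⟩

lemma quasi_bounds_of_split {u p v : X} {L K D₁ D₂ : ℝ} (hL : 1 ≤ L) (hK : 0 ≤ K)
    (hD₁ : 0 ≤ D₁) (hD₂ : 0 ≤ D₂)
    (h₁ : D₁ / L - L ≤ dist u p ∧ dist u p ≤ L * D₁ + L)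
    (h₂ : D₂ / L - L ≤ dist p v ∧ dist p v ≤ L * D₂ + L)
    (hsplit : dist u p + dist p v ≤ K * dist u v + K) :
    (D₁ + D₂) / (L * (K + 2)) - L * (K + 2) ≤ dist u v ∧
      dist u v ≤ L * (K + 2) * (D₁ + D₂) + L * (K + 2) := by
  have hL₀ : 0 < L := by linarith
  have hL' : 0 < L * (K + 2) := by positivity
  have hLL' : L ≤ L * (K + 2) := by nlinarith
  constructor
  · have hsum : D₁ + D₂ ≤ L * K * dist u v + L * K + 2 * L ^ 2 := by
      have e : (D₁ + D₂) / L ≤ K * dist u v + K + 2 * L := by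
        rw [add_div]; linarith [h₁.1, h₂.1]
      rw [div_le_iff₀ hL₀] at e
      nlinarith
    have hsq : L * K + 2 * L ^ 2 ≤ (L * (K + 2)) ^ 2 := by
      nlinarith [mul_le_mul_of_nonneg_left hL hK, mul_le_mul_of_nonneg_left hLL' hL'.le]
    rw [sub_le_iff_le_add, div_le_iff₀ hL']
    nlinarith [mul_nonneg hL₀.le (dist_nonneg (x := u) (y := v))]
  · have htri : dist u v ≤ L * (D₁ + D₂) + 2 * L := by
      linarith [dist_triangle u p v, h₁.2, h₂.2]
    nlinarith [mul_le_mul_of_nonneg_right hLL' (add_nonneg hD₁ hD₂)]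

lemma IsQuasigeodesicOn.bounds_of_le {γ : ℝ → X} {L A a b : ℝ} {x y : X}
    (hγ : IsQuasigeodesicOn L A a b γ x y) {r r' : ℝ} (hr : r ∈ Icc a b) (hr' : r' ∈ Icc a b)
    (hle : r ≤ r') :
    (r' - r) / L - A ≤ dist (γ r) (γ r') ∧ dist (γ r) (γ r') ≤ L * (r' - r) + A := by
  rw [← abs_of_nonneg (sub_nonneg.mpr hle), abs_sub_comm]
  exact hγ.2.2.2 r hr r' hr'

lemma isQuasigeodesicOn_of_le {γ : ℝ → X} {L A a b : ℝ} {x y : X} (hab : a ≤ b)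
    (ha : γ a = x) (hb : γ b = y)
    (h : ∀ r ∈ Icc a b, ∀ r' ∈ Icc a b, r ≤ r' →
      (r' - r) / L - A ≤ dist (γ r) (γ r') ∧ dist (γ r) (γ r') ≤ L * (r' - r) + A) :
    IsQuasigeodesicOn L A a b γ x y := by
  refine ⟨hab, ha, hb, fun r hr r' hr' => ?_⟩
  rcases le_total r r' with hle | hle
  · rw [abs_sub_comm, abs_of_nonneg (sub_nonneg.mpr hle)]
    exact h r hr r' hr' hle
  · rw [abs_of_nonneg (sub_nonneg.mpr hle), dist_comm]
    exact h r' hr' r hr hle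

end Quasigeodesic

section Concatenation

variable {X : Type*}

noncomputable def concatPath (s : ℝ) (α β : ℝ → X) : ℝ → X :=
  fun r => if r ≤ s then α r else β (r - s)

lemma concatPath_of_le {s r : ℝ} (α β : ℝ → X) (hr : r ≤ s) : concatPath s α β r = α r :=
  if_pos hr

lemma concatPath_of_ge {s r : ℝ} {α β : ℝ → X} (hαβ : α s = β 0) (hr : s ≤ r) :
    concatPath s α β r = β (r - s) := by
  rcases hr.lt_or_eq with hlt | rfl
  · exact if_neg (not_le.mpr hlt)
  · rw [concatPath_of_le α β le_rfl, sub_self, hαβ]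

variable [MetricSpace X]

lemma IsQuasigeodesicOn.concatPath {α β : ℝ → X} {x p y : X} {L K s t : ℝ}
    (hα : IsQuasigeodesicOn L L 0 s α x p) (hβ : IsQuasigeodesicOn L L 0 t β p y)
    (hL : 1 ≤ L) (hK : 0 ≤ K)
    (hsplit : ∀ r ∈ Icc 0 s, ∀ r' ∈ Icc 0 t,
      dist (α r) p + dist p (β r') ≤ K * dist (α r) (β r') + K) :
    IsQuasigeodesicOn (L * (K + 2)) (L * (K + 2)) 0 (s + t) (concatPath s α β) x y := by
  obtain ⟨hs, hα₀, hαs, -⟩ := id hα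
  obtain ⟨ht, hβ₀, hβt, -⟩ := id hβ
  have hαβ : α s = β 0 := hαs.trans hβ₀.symm
  have hL₀ : 0 < L := by linarith
  have hLL' : L ≤ L * (K + 2) := by nlinarith
  refine isQuasigeodesicOn_of_le (by linarith) ?_ ?_ fun r hr r' hr' hle => ?_
  · rw [concatPath_of_le α β hs, hα₀]
  · rw [concatPath_of_ge hαβ (by linarith), add_sub_cancel_left, hβt]
  obtain ⟨hr₀, -⟩ := hr
  obtain ⟨-, hr'₁⟩ := hr'
  rcases le_total r' s with hr's | hsr'
  · rw [concatPath_of_le α β (hle.trans hr's), concatPath_of_le α β hr's]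
    exact quasi_bounds_mono hL₀ hLL' (by linarith)
      (hα.bounds_of_le ⟨hr₀, hle.trans hr's⟩ ⟨hr₀.trans hle, hr's⟩ hle)
  rcases le_total s r with hsr | hrs
  · rw [concatPath_of_ge hαβ hsr, concatPath_of_ge hαβ hsr', ← sub_sub_sub_cancel_right r' r s]
    exact quasi_bounds_mono hL₀ hLL' (by linarith)
      (hβ.bounds_of_le ⟨by linarith, by linarith⟩ ⟨by linarith, by linarith⟩ (by linarith))
  · rw [concatPath_of_le α β hrs, concatPath_of_ge hαβ hsr']
    have hr_mem : r ∈ Icc 0 s := ⟨hr₀, hrs⟩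
    have hr'_mem : r' - s ∈ Icc 0 t := ⟨by linarith, by linarith⟩
    have h₁ := hα.bounds_of_le hr_mem ⟨hs, le_rfl⟩ hrs
    have h₂ := hβ.bounds_of_le ⟨le_rfl, ht⟩ hr'_mem hr'_mem.1
    rw [hαs] at h₁
    rw [hβ₀, sub_zero] at h₂
    have h := quasi_bounds_of_split hL hK (by linarith) (by linarith) h₁ h₂
      (hsplit r hr_mem (r' - s) hr'_mem)
    rwa [sub_add_sub_cancel'] at h

end Concatenation

namespace IsCoarseMedian

variable {X : Type*} [MetricSpace X] {C : ℝ} {μ : X → X → X → X}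

lemma nonneg (h : IsCoarseMedian C μ) (x : X) : 0 ≤ C :=
  dist_nonneg.trans (h.2.2.2.1 x x x x)

lemma rotate (h : IsCoarseMedian C μ) (a b c : X) : μ a b c = μ b c a := by
  rw [h.1, h.2.1]

lemma swap_outer (h : IsCoarseMedian C μ) (a b c : X) : μ a b c = μ c b a := by
  rw [h.2.1, h.1, h.2.1]

lemma median_self_left (h : IsCoarseMedian C μ) (a b : X) : μ a b a = a := by
  rw [h.2.1, h.2.2.1]

lemma median_self_right (h : IsCoarseMedian C μ) (a b : X) : μ a a b = a :=
  h.2.2.1 a b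

lemma dist_assoc_le (h : IsCoarseMedian C μ) (x y z w : X) :
    dist (μ (μ x w y) w z) (μ x w (μ y w z)) ≤ C :=
  h.2.2.2.1 x y z w

lemma dist_median_left_le (h : IsCoarseMedian C μ) (a a' b c : X) :
    dist (μ a b c) (μ a' b c) ≤ C * dist a a' + C :=
  h.2.2.2.2 a b c a'

lemma dist_median_right_le (h : IsCoarseMedian C μ) (a b c c' : X) :
    dist (μ a b c) (μ a b c') ≤ C * dist c c' + C := by
  rw [h.swap_outer a, h.swap_outer a]
  exact h.dist_median_left_le c c' b a

lemma dist_median_median_le (h : IsCoarseMedian C μ) (a b c : X) :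
    dist (μ (μ a b c) b c) (μ a b c) ≤ C := by
  simpa only [h.median_self_left] using h.dist_assoc_le a c c b

lemma dist_median_endpoints_le_of_mem_cmInterval (h : IsCoarseMedian C μ) {x y p : X}
    (hp : p ∈ cmInterval μ x y) : dist (μ x p y) p ≤ C := by
  obtain ⟨z, rfl⟩ := hp
  rw [h.1 x, ← h.rotate z x y]
  exact h.dist_median_median_le z x y

/-- Writing `a = μ(x,p,z₁)`, `b = μ(p,y,z₂)` and `w = μ(z₂,p,z₁)`, coarse associativity gives
`μ(a,p,b) ≈ μ(x,p,μ(y,p,w)) ≈ μ(μ(x,p,y),p,w)`, and `μ(x,p,y) ≈ p` while `μ(p,p,w) = p`. -/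
lemma dist_median_le_of_mem_cmInterval (h : IsCoarseMedian C μ) {x y p a b : X}
    (hp : p ∈ cmInterval μ x y) (ha : a ∈ cmInterval μ x p) (hb : b ∈ cmInterval μ p y) :
    dist (μ a p b) p ≤ 2 * C ^ 2 + 4 * C := by
  obtain ⟨z₁, rfl⟩ := ha
  obtain ⟨z₂, rfl⟩ := hb
  have hC := h.nonneg x
  set w := μ z₂ p z₁
  have hstep₁ : dist (μ (μ x p z₁) p (μ p y z₂)) (μ x p (μ z₁ p (μ p y z₂))) ≤ C :=
    h.dist_assoc_le x z₁ _ p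
  have hinner : dist (μ z₁ p (μ p y z₂)) (μ y p w) ≤ C := by
    rw [h.swap_outer z₁, h.1 p y]
    exact h.dist_assoc_le y z₂ z₁ p
  have hstep₂ : dist (μ x p (μ z₁ p (μ p y z₂))) (μ x p (μ y p w)) ≤ C * C + C := by
    have := h.dist_median_right_le x p (μ z₁ p (μ p y z₂)) (μ y p w)
    nlinarith [mul_le_mul_of_nonneg_left hinner hC]
  have hstep₃ : dist (μ x p (μ y p w)) (μ (μ x p y) p w) ≤ C := by
    rw [dist_comm]
    exact h.dist_assoc_le x y w p
  have hstep₄ : dist (μ (μ x p y) p w) p ≤ C * C + C := by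
    have := h.dist_median_left_le (μ x p y) p p w
    rw [h.median_self_right] at this
    nlinarith [mul_le_mul_of_nonneg_left (h.dist_median_endpoints_le_of_mem_cmInterval hp) hC]
  linarith [dist_triangle4 (μ (μ x p z₁) p (μ p y z₂)) (μ x p (μ z₁ p (μ p y z₂)))
    (μ x p (μ y p w)) (μ (μ x p y) p w), dist_triangle (μ (μ x p z₁) p (μ p y z₂))
    (μ (μ x p y) p w) p]

lemma dist_add_dist_le_of_mem_cmInterval (h : IsCoarseMedian C μ) {x y p a b : X}
    (hp : p ∈ cmInterval μ x y) (ha : a ∈ cmInterval μ x p) (hb : b ∈ cmInterval μ p y) :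
    dist a p + dist p b ≤ (4 * C ^ 2 + 10 * C) * dist a b + (4 * C ^ 2 + 10 * C) := by
  have hC := h.nonneg x
  have hmid := h.dist_median_le_of_mem_cmInterval hp ha hb
  have ha_mid : dist a (μ a p b) ≤ C * dist a b + C := by
    simpa only [h.median_self_left] using h.dist_median_right_le a p a b
  have hb_mid : dist b (μ a p b) ≤ C * dist a b + C := by
    simpa only [h.median_self_left, dist_comm b a] using h.dist_median_left_le b a p b
  have hslack : 0 ≤ (4 * C ^ 2 + 8 * C) * dist a b := by positivity
  linarith [dist_triangle a (μ a p b) p, dist_triangle p (μ a p b) b, dist_comm p (μ a p b),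
    dist_comm (μ a p b) b]

end IsCoarseMedian

/-- Lemma 3.3(1): the concatenation of quasigeodesics lying in the intervals `[x,p]_μ` and
`[p,y]_μ`, where `p ∈ [x,y]_μ`, is a uniform-quality quasigeodesic from `x` to `y`. -/
theorem concatenation_quasigeodesic :
    ∀ C L : ℝ, 1 ≤ C → 1 ≤ L → ∃ L' : ℝ, 1 ≤ L' ∧
      ∀ (X : Type u) [MetricSpace X], IsGeodesicSpace X →
        ∀ μ : X → X → X → X, IsCoarseMedian C μ →
          ∀ x y p : X, p ∈ cmInterval μ x y →
            ∀ (s t : ℝ) (α β : ℝ → X),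
              IsQuasigeodesicOn L L 0 s α x p →
              α '' Set.Icc 0 s ⊆ cmInterval μ x p →
              IsQuasigeodesicOn L L 0 t β p y →
              β '' Set.Icc 0 t ⊆ cmInterval μ p y →
              IsQuasigeodesicOn L' L' 0 (s + t)
                (fun r => if r ≤ s then α r else β (r - s)) x y := by
  intro C L hC hL
  refine ⟨L * (4 * C ^ 2 + 10 * C + 2), by nlinarith, ?_⟩
  intro X _ _ μ hμ x y p hp s t α β hα hαI hβ hβI
  exact hα.concatPath hβ hL (by positivity) fun r hr r' hr' =>
    hμ.dist_add_dist_le_of_mem_cmInterval hp (hαI ⟨r, hr, rfl⟩) (hβI ⟨r', hr', rfl⟩)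
end

section
/- For all C ≥ 1 there exists C₂ ≥ 1 (depending only on C) such that the following holds. Let (X, μ) be a C-coarse median space, where X is a geodesic metric space. Then for all x, y ∈ X, every point p ∈ [x,y]_μ lies in the image of some (C₂, C₂)-quasigeodesic from x to y whose image is contained in [x,y]_μ. -/
open Metric Set

universe u

/- ============================ auxiliary material ============================ -/

set_option linter.unusedSectionVars false
set_option maxHeartbeats 1000000

section CMAux
variable {X : Type u} [MetricSpace X] {C : ℝ} {μ : X → X → X → X}

theorem cm_idem2 (hs2 : ∀ x y z : X, μ x y z = μ x z y)
    (hid : ∀ x y : X, μ x x y = x) (a b : X) : μ a b a = a := by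
  rw [hs2]; exact hid a b

theorem cm_idem3 (hs1 : ∀ x y z : X, μ x y z = μ y x z)
    (hs2 : ∀ x y z : X, μ x y z = μ x z y)
    (hid : ∀ x y : X, μ x x y = x) (a b : X) : μ a b b = b := by
  rw [hs1, hs2, hid]

theorem cm_sw13 (hs1 : ∀ x y z : X, μ x y z = μ y x z)
    (hs2 : ∀ x y z : X, μ x y z = μ x z y) (a b c : X) : μ a b c = μ c b a := by
  rw [hs2 a b c, hs1 a c b, hs2 c a b]

theorem cm_lip3 (hs1 : ∀ x y z : X, μ x y z = μ y x z)
    (hs2 : ∀ x y z : X, μ x y z = μ x z y)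
    (hL : ∀ x y z w : X, dist (μ x y z) (μ w y z) ≤ C * dist x w + C)
    (a b u v : X) : dist (μ a b u) (μ a b v) ≤ C * dist u v + C := by
  have h1 : μ a b u = μ u a b := by rw [hs2 a b u, hs1 a u b]
  have h2 : μ a b v = μ v a b := by rw [hs2 a b v, hs1 a v b]
  rw [h1, h2]; exact hL u a b v

theorem cm_lip2 (hs1 : ∀ x y z : X, μ x y z = μ y x z)
    (hL : ∀ x y z w : X, dist (μ x y z) (μ w y z) ≤ C * dist x w + C)
    (a b u v : X) : dist (μ a u b) (μ a v b) ≤ C * dist u v + C := by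
  rw [hs1 a u b, hs1 a v b]; exact hL u a b v

theorem cm_gate (hs2 : ∀ x y z : X, μ x y z = μ x z y)
    (hid : ∀ x y : X, μ x x y = x)
    (hK : ∀ x y z w : X, dist (μ (μ x w y) w z) (μ x w (μ y w z)) ≤ C)
    (a b w : X) : dist (μ a b (μ a b w)) (μ a b w) ≤ C := by
  have h := hK a a w b
  rw [cm_idem2 hs2 hid a b] at h
  rw [dist_comm]; exact h

theorem cm_phigate (hs1 : ∀ x y z : X, μ x y z = μ y x z)
    (hK : ∀ x y z w : X, dist (μ (μ x w y) w z) (μ x w (μ y w z)) ≤ C)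
    (a b c v : X) :
    dist (μ a b (μ a c v)) (μ a (μ a b c) v) ≤ C := by
  have h := hK b c v a
  rw [← hs1 a b c, ← hs1 a c v, ← hs1 a b (μ a c v)] at h
  rw [← hs1 a (μ a b c) v] at h
  rw [dist_comm]; exact h

theorem cm_hu (hs1 : ∀ x y z : X, μ x y z = μ y x z)
    (hs2 : ∀ x y z : X, μ x y z = μ x z y)
    (hid : ∀ x y : X, μ x x y = x)
    (hK : ∀ x y z w : X, dist (μ (μ x w y) w z) (μ x w (μ y w z)) ≤ C)
    (hL : ∀ x y z w : X, dist (μ x y z) (μ w y z) ≤ C * dist x w + C)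
    (hC : 1 ≤ C) (a b c w : X) :
    dist (μ a (μ a b c) (μ a b (μ a c w))) (μ a b (μ a c w)) ≤ 7 * C ^ 3 := by
  have hC0 : (0:ℝ) ≤ C := by linarith
  have e0 : μ a c w = μ c a w := hs1 a c w
  have e1 : μ a b (μ c a w) = μ b a (μ c a w) := hs1 a b _
  have e2 : μ a b c = μ b a c := hs1 a b c
  have e3 : μ a (μ b a c) (μ b a (μ c a w)) = μ (μ b a c) a (μ b a (μ c a w)) := hs1 a _ _
  rw [e0, e1, e2, e3]
  set t0 := μ c a w with ht0
  set q := μ b a t0 with hq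
  set P := μ b a c with hP
  have h1 : dist (μ P a q) (μ b a (μ c a q)) ≤ C := hK b c q a
  have h2 : dist (μ c a q) (μ (μ c a b) a t0) ≤ C := by
    have := hK c b t0 a
    rw [dist_comm]; exact this
  have h3 : μ (μ c a b) a t0 = μ P a t0 := by
    have : μ c a b = μ b a c := by rw [hs1 c a b, hs2 a c b, hs1 a b c]
    rw [this, hP]
  have h4 : dist (μ P a t0) (μ b a (μ c a t0)) ≤ C := hK b c t0 a
  have h5 : dist (μ c a t0) t0 ≤ C := by
    rw [ht0]; exact cm_gate hs2 hid hK c a w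
  have h6 : dist (μ b a (μ c a t0)) (μ b a t0) ≤ C * C + C := by
    have := cm_lip3 hs1 hs2 hL b a (μ c a t0) t0
    nlinarith [dist_nonneg (x := μ c a t0) (y := t0)]
  have h7 : dist (μ c a q) q ≤ C ^ 2 + 3 * C := by
    rw [h3] at h2
    have t1 := dist_triangle (μ c a q) (μ P a t0) (μ b a (μ c a t0))
    have t2 := dist_triangle (μ c a q) (μ b a (μ c a t0)) (μ b a t0)
    have e : q = μ b a t0 := hq
    rw [← e] at t2 h6
    nlinarith
  have h8 : dist (μ b a (μ c a q)) (μ b a q) ≤ C * (C ^ 2 + 3 * C) + C := by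
    have := cm_lip3 hs1 hs2 hL b a (μ c a q) q
    nlinarith [dist_nonneg (x := μ c a q) (y := q)]
  have h9 : dist (μ b a q) q ≤ C := by
    rw [hq]; exact cm_gate hs2 hid hK b a t0
  have t3 := dist_triangle (μ P a q) (μ b a (μ c a q)) (μ b a q)
  have t4 := dist_triangle (μ P a q) (μ b a q) q
  nlinarith [dist_nonneg (x := μ P a q) (y := μ b a q)]

theorem cm_gatelemma (hs1 : ∀ x y z : X, μ x y z = μ y x z)
    (hs2 : ∀ x y z : X, μ x y z = μ x z y)
    (hid : ∀ x y : X, μ x x y = x)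
    (hK : ∀ x y z w : X, dist (μ (μ x w y) w z) (μ x w (μ y w z)) ≤ C)
    (hL : ∀ x y z w : X, dist (μ x y z) (μ w y z) ≤ C * dist x w + C)
    (hC : 1 ≤ C) {h : ℝ} (x y p u v : X)
    (hp : dist (μ x y p) p ≤ C) (hu : dist (μ x p u) u ≤ h) (hv : dist (μ y p v) v ≤ h) :
    dist (μ u v p) p ≤ 2 * C * h + 3 * C ^ 2 + 6 * C := by
  have hC0 : (0:ℝ) ≤ C := by linarith
  have hh0 : (0:ℝ) ≤ h := le_trans dist_nonneg hu
  rw [hs2 u v p]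
  have k1 : dist (μ u p v) (μ (μ x p u) p v) ≤ C * h + C := by
    have := hL u p v (μ x p u)
    have e : dist u (μ x p u) ≤ h := by rw [dist_comm]; exact hu
    nlinarith [dist_nonneg (x := u) (y := μ x p u)]
  have k2 : dist (μ (μ x p u) p v) (μ (μ x p u) p (μ y p v)) ≤ C * h + C := by
    have := cm_lip3 hs1 hs2 hL (μ x p u) p v (μ y p v)
    have e : dist v (μ y p v) ≤ h := by rw [dist_comm]; exact hv
    nlinarith [dist_nonneg (x := v) (y := μ y p v)]
  have k3 : dist (μ (μ x p u) p (μ y p v)) (μ x p (μ u p (μ y p v))) ≤ C :=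
    hK x u (μ y p v) p
  have k7 : dist (μ u p (μ y p v)) (μ y p (μ u p v)) ≤ 2 * C := by
    have k4 : dist (μ u p (μ y p v)) (μ (μ u p y) p v) ≤ C := by
      rw [dist_comm]; exact hK u y v p
    have k5 : μ (μ u p y) p v = μ (μ y p u) p v := by rw [cm_sw13 hs1 hs2 u p y]
    have k6 : dist (μ (μ y p u) p v) (μ y p (μ u p v)) ≤ C := hK y u v p
    rw [k5] at k4
    have := dist_triangle (μ u p (μ y p v)) (μ (μ y p u) p v) (μ y p (μ u p v))
    linarith
  have k8 : dist (μ x p (μ u p (μ y p v))) (μ x p (μ y p (μ u p v))) ≤ C * (2*C) + C := by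
    have := cm_lip3 hs1 hs2 hL x p (μ u p (μ y p v)) (μ y p (μ u p v))
    nlinarith [dist_nonneg (x := μ u p (μ y p v)) (y := μ y p (μ u p v))]
  have k9 : dist (μ x p (μ y p (μ u p v))) (μ (μ x p y) p (μ u p v)) ≤ C := by
    rw [dist_comm]; exact hK x y (μ u p v) p
  have k10 : dist (μ (μ x p y) p (μ u p v)) p ≤ C * C + C := by
    have e : dist (μ x p y) p ≤ C := by rw [hs2 x p y]; exact hp
    have := hL (μ x p y) p (μ u p v) p
    rw [hid p (μ u p v)] at this
    nlinarith [dist_nonneg (x := μ x p y) (y := p)]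
  have t1 := dist_triangle (μ u p v) (μ (μ x p u) p v) (μ (μ x p u) p (μ y p v))
  have t2 := dist_triangle (μ u p v) (μ (μ x p u) p (μ y p v)) (μ x p (μ u p (μ y p v)))
  have t3 := dist_triangle (μ u p v) (μ x p (μ u p (μ y p v))) (μ x p (μ y p (μ u p v)))
  have t4 := dist_triangle (μ u p v) (μ x p (μ y p (μ u p v))) (μ (μ x p y) p (μ u p v))
  have t5 := dist_triangle (μ u p v) (μ (μ x p y) p (μ u p v)) p
  nlinarith
end CMAux

section Chains
variable {X : Type u} [MetricSpace X]

/-- A chain of `K` steps from `u` to `v`, within the set `P`, with steps of size `≤ S`. -/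
def IsChainP (P : X → Prop) (S : ℝ) (u v : X) (K : ℕ) : Prop :=
  ∃ f : ℕ → X, f 0 = u ∧ f K = v ∧ (∀ i, i ≤ K → P (f i)) ∧
    (∀ i, i < K → dist (f i) (f (i+1)) ≤ S)

theorem chain_concat {P : X → Prop} {S : ℝ} {u v w : X} {K₁ K₂ : ℕ}
    (h1 : IsChainP P S u v K₁) (h2 : IsChainP P S v w K₂) :
    IsChainP P S u w (K₁ + K₂) := by
  obtain ⟨f, hf0, hfK, hfP, hfS⟩ := h1
  obtain ⟨g, hg0, hgK, hgP, hgS⟩ := h2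
  refine ⟨fun i => if i < K₁ then f i else g (i - K₁), ?_, ?_, ?_, ?_⟩
  · by_cases h : 0 < K₁
    · simp [h, hf0]
    · have h0 : K₁ = 0 := by omega
      simp [h0] at hfK ⊢
      rw [hg0, ← hfK, hf0]
  · have : ¬ (K₁ + K₂ < K₁) := by omega
    simp [this, hgK]
  · intro i hi
    by_cases h : i < K₁
    · simpa [h] using hfP i (le_of_lt h)
    · simpa [h] using hgP (i - K₁) (by omega)
  · intro i hi
    by_cases h : i + 1 < K₁
    · simp [h, lt_of_lt_of_le (Nat.lt_succ_self i) (le_of_lt h)]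
      exact hfS i (by omega)
    · by_cases h' : i < K₁
      · have e : i + 1 = K₁ := by omega
        have : g ((i+1) - K₁) = f (i+1) := by
          rw [e, Nat.sub_self, hg0, ← e, ← hfK, e]
        simp only [h', if_pos, if_neg (by omega : ¬ i + 1 < K₁)]
        rw [this]
        exact hfS i (by omega)
      · have e1 : i + 1 - K₁ = (i - K₁) + 1 := by omega
        simp only [if_neg h', if_neg (by omega : ¬ i + 1 < K₁), e1]
        exact hgS (i - K₁) (by omega)

theorem chain_dist {S : ℝ} {K : ℕ} (f : ℕ → X)
    (hstep : ∀ i, i < K → dist (f i) (f (i+1)) ≤ S) :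
    ∀ d i, i + d ≤ K → dist (f i) (f (i + d)) ≤ S * d := by
  intro d
  induction d with
  | zero =>
    intro i _
    have h0 : 0 < K ∨ K = 0 := by omega
    simp
  | succ n ih =>
    intro i hi
    have t := dist_triangle (f i) (f (i + n)) (f (i + n + 1))
    have h1 := ih i (by omega)
    have h2 := hstep (i + n) (by omega)
    have e : (i + (n+1)) = (i + n) + 1 := by omega
    rw [e]
    push_cast
    calc dist (f i) (f (i + n + 1)) ≤ S * n + S := by linarith
    _ = S * (n + 1) := by ring

theorem chain_conn (hgeo : IsGeodesicSpace X) (P : X → Prop) (Φ : X → X) (S : ℝ)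
    (hΦP : ∀ w : X, P (Φ w))
    (hΦlip : ∀ r r' : X, dist r r' ≤ 1 → dist (Φ r) (Φ r') ≤ S)
    (hΦnear : ∀ u : X, P u → dist (Φ u) u ≤ S)
    (u v : X) (hu : P u) (hv : P v) :
    ∃ K : ℕ, (K : ℝ) ≤ dist u v + 3 ∧ IsChainP P S u v K := by
  obtain ⟨γ, hγ0, hγd, hγ⟩ := hgeo u v
  set D := dist u v with hD
  have hD0 : 0 ≤ D := dist_nonneg
  set K := Nat.ceil D with hK
  have hKD : D ≤ (K : ℝ) := Nat.le_ceil D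
  refine ⟨K + 2, ?_, ?_⟩
  · have := Nat.ceil_lt_add_one hD0
    push_cast
    push_cast at this
    linarith
  refine ⟨fun i => if i = 0 then u else if K + 2 ≤ i then v
      else Φ (γ (min ((i:ℝ) - 1) D)), by simp, by simp, ?_, ?_⟩
  · intro i hi
    by_cases h0 : i = 0
    · simpa [h0] using hu
    by_cases h2 : K + 2 ≤ i
    · simpa [h0, h2] using hv
    · simpa [h0, h2] using hΦP _
  · intro i hi
    by_cases h0 : i = 0
    · subst h0
      have e1 : ((1:ℕ):ℝ) - 1 = 0 := by norm_num
      simp only [if_neg (by omega : ¬ (1:ℕ) = 0), if_neg (by omega : ¬ K + 2 ≤ 1),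
        if_pos rfl, e1, min_eq_left hD0, hγ0]
      rw [dist_comm]
      exact hΦnear u hu
    by_cases hlast : i = K + 1
    · subst hlast
      have emin : min (((K:ℝ) + 1) - 1) D = D := by
        rw [min_eq_right]; push_cast; linarith
      simp only [if_neg h0, if_neg (by omega : ¬ K + 2 ≤ K + 1),
        if_neg (by omega : ¬ K + 1 + 1 = 0), if_pos (by omega : K + 2 ≤ K + 1 + 1)]
      push_cast
      rw [emin, hγd]
      exact hΦnear v hv
    · have hiK : i ≤ K := by omega
      have hi1 : 1 ≤ i := by omega
      have hcast : (1:ℝ) ≤ (i:ℝ) := by exact_mod_cast hi1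
      simp only [if_neg h0, if_neg (by omega : ¬ K + 2 ≤ i),
        if_neg (by omega : ¬ i + 1 = 0), if_neg (by omega : ¬ K + 2 ≤ i + 1)]
      apply hΦlip
      have hs0 : 0 ≤ min ((i:ℝ) - 1) D := le_min (by linarith) hD0
      have hsD : min ((i:ℝ) - 1) D ≤ D := min_le_right _ _
      have ht0 : 0 ≤ min (((i:ℝ) + 1) - 1) D := le_min (by linarith) hD0
      have htD : min (((i:ℝ) + 1) - 1) D ≤ D := min_le_right _ _
      push_cast
      rw [hγ _ ⟨hs0, hsD⟩ _ ⟨ht0, htD⟩]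
      have m1 : min ((i:ℝ) - 1) D ≤ min (((i:ℝ) + 1) - 1) D :=
        min_le_min (by linarith) le_rfl
      have m2 : min (((i:ℝ) + 1) - 1) D ≤ min ((i:ℝ) - 1) D + 1 := by
        rcases le_total ((i:ℝ) + 1 - 1) D with h | h
        · rw [min_eq_left h, min_eq_left (by linarith)]; linarith
        · rw [min_eq_right h]
          rcases le_total ((i:ℝ) - 1) D with h' | h'
          · rw [min_eq_left h']; linarith
          · rw [min_eq_right h']; linarith
      rw [abs_sub_le_iff]
      constructor <;> linarith

end Chains

/- ============================ main theorem ============================ -/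

/-- Lemma 3.3(2): every point of an interval `[x,y]_μ` lies on a uniform-quality
quasigeodesic from `x` to `y` contained in `[x,y]_μ`. -/
theorem quasigeodesic_through_point :
    ∀ C : ℝ, 1 ≤ C → ∃ C₂ : ℝ, 1 ≤ C₂ ∧
      ∀ (X : Type u) [MetricSpace X], IsGeodesicSpace X →
        ∀ μ : X → X → X → X, IsCoarseMedian C μ →
          ∀ x y p : X, p ∈ cmInterval μ x y →
            ∃ (a b : ℝ) (γ : ℝ → X), IsQuasigeodesicOn C₂ C₂ a b γ x y ∧
              γ '' Set.Icc a b ⊆ cmInterval μ x y ∧ p ∈ γ '' Set.Icc a b := by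
  intro C hC
  have hC0 : (0:ℝ) ≤ C := by linarith
  have p2 : (1:ℝ) ≤ C^2 := by nlinarith
  have p3 : (1:ℝ) ≤ C^3 := by nlinarith
  have p4 : (1:ℝ) ≤ C^4 := by nlinarith
  have q12 : C ≤ C^2 := by nlinarith
  have q23 : C^2 ≤ C^3 := by nlinarith
  have q34 : C^3 ≤ C^4 := by nlinarith
  refine ⟨100*C^4, by linarith, ?_⟩
  intro X _ hgeo μ hμ x y p hp
  classical
  obtain ⟨hs1, hs2, hid, hKc, hLc⟩ := hμ
  obtain ⟨z, hz⟩ := hp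
  -- abbreviations
  set S : ℝ := 20*C^3 with hSdef
  have hS0 : (0:ℝ) ≤ S := by rw [hSdef]; nlinarith
  -- basic gate facts
  have hpxy : dist (μ x y p) p ≤ C := by
    rw [← hz]; exact cm_gate hs2 hid hKc x y z
  have hz' : μ y x z = p := (hs1 y x z).trans hz
  -- predicates
  set Px : X → Prop := fun u => dist (μ x p u) u ≤ 7*C^3 ∧ u ∈ cmInterval μ x y with hPxdef
  set Py : X → Prop := fun u => dist (μ y p u) u ≤ 7*C^3 ∧ u ∈ cmInterval μ x y with hPydef
  -- x-side retraction facts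
  have ΦxP : ∀ w : X, Px (μ x y (μ x z w)) := by
    intro w
    rw [hPxdef]
    refine ⟨?_, ⟨μ x z w, rfl⟩⟩
    have := cm_hu hs1 hs2 hid hKc hLc hC x y z w
    rw [hz] at this; exact this
  have Φxlip : ∀ r r' : X, dist r r' ≤ 1 →
      dist (μ x y (μ x z r)) (μ x y (μ x z r')) ≤ S := by
    intro r r' hrr
    have l1 := cm_lip3 hs1 hs2 hLc x z r r'
    have l2 := cm_lip3 hs1 hs2 hLc x y (μ x z r) (μ x z r')
    rw [hSdef]
    nlinarith [dist_nonneg (x := r) (y := r'), dist_nonneg (x := μ x z r) (y := μ x z r')]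
  have Φxnear : ∀ u : X, Px u → dist (μ x y (μ x z u)) u ≤ S := by
    intro u hu
    have g := cm_phigate hs1 hKc x y z u
    rw [hz] at g
    have t := dist_triangle (μ x y (μ x z u)) (μ x p u) u
    have hu1 : dist (μ x p u) u ≤ 7*C^3 := (by rw [hPxdef] at hu; exact hu.1)
    rw [hSdef]
    nlinarith
  -- y-side retraction facts
  have ΦyP : ∀ w : X, Py (μ y x (μ y z w)) := by
    intro w
    rw [hPydef]
    refine ⟨?_, ⟨μ y z w, hs1 x y (μ y z w)⟩⟩
    have := cm_hu hs1 hs2 hid hKc hLc hC y x z w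
    rw [hz'] at this; exact this
  have Φylip : ∀ r r' : X, dist r r' ≤ 1 →
      dist (μ y x (μ y z r)) (μ y x (μ y z r')) ≤ S := by
    intro r r' hrr
    have l1 := cm_lip3 hs1 hs2 hLc y z r r'
    have l2 := cm_lip3 hs1 hs2 hLc y x (μ y z r) (μ y z r')
    rw [hSdef]
    nlinarith [dist_nonneg (x := r) (y := r'), dist_nonneg (x := μ y z r) (y := μ y z r')]
  have Φynear : ∀ u : X, Py u → dist (μ y x (μ y z u)) u ≤ S := by
    intro u hu
    have g := cm_phigate hs1 hKc y x z u
    rw [hz'] at g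
    have t := dist_triangle (μ y x (μ y z u)) (μ y p u) u
    have hu1 : dist (μ y p u) u ≤ 7*C^3 := (by rw [hPydef] at hu; exact hu.1)
    rw [hSdef]
    nlinarith
  -- endpoints are in the sets
  have Pxx : Px x := by
    rw [hPxdef]
    constructor
    · rw [cm_idem2 hs2 hid x p]; simp; nlinarith
    · exact ⟨x, cm_idem2 hs2 hid x y⟩
  have Pxp : Px p := by
    rw [hPxdef]
    constructor
    · rw [cm_idem3 hs1 hs2 hid x p]; simp; nlinarith
    · exact ⟨z, hz⟩
  have Pyp : Py p := by
    rw [hPydef]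
    constructor
    · rw [cm_idem3 hs1 hs2 hid y p]; simp; nlinarith
    · exact ⟨z, hz⟩
  have Pyy : Py y := by
    rw [hPydef]
    constructor
    · rw [cm_idem2 hs2 hid y p]; simp; nlinarith
    · exact ⟨y, cm_idem3 hs1 hs2 hid x y⟩
  -- connectivity
  have connx := chain_conn hgeo Px (fun w => μ x y (μ x z w)) S ΦxP Φxlip Φxnear
  have conny := chain_conn hgeo Py (fun w => μ y x (μ y z w)) S ΦyP Φylip Φynear
  -- minimal chains
  have hex_x : ∃ K, IsChainP Px S x p K := by
    obtain ⟨K, _, hch⟩ := connx x p Pxx Pxp; exact ⟨K, hch⟩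
  have hex_y : ∃ K, IsChainP Py S p y K := by
    obtain ⟨K, _, hch⟩ := conny p y Pyp Pyy; exact ⟨K, hch⟩
  let n := Nat.find hex_x
  let m := Nat.find hex_y
  obtain ⟨q, hq0, hqn, hqP, hqS⟩ : IsChainP Px S x p n := Nat.find_spec hex_x
  obtain ⟨r, hr0, hrm, hrP, hrS⟩ : IsChainP Py S p y m := Nat.find_spec hex_y
  -- key lower bound (x side)
  have keyx : ∀ i j : ℕ, i ≤ j → j ≤ n → ((j:ℝ) - (i:ℝ)) ≤ dist (q i) (q j) + 3 := by
    intro i j hij hjn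
    obtain ⟨K', hK'len, hK'ch⟩ := connx (q i) (q j) (hqP i (le_trans hij hjn)) (hqP j hjn)
    have sub1 : IsChainP Px S x (q i) i :=
      ⟨q, hq0, rfl, fun k hk => hqP k (by omega), fun k hk => hqS k (by omega)⟩
    have sub2 : IsChainP Px S (q j) p (n - j) := by
      refine ⟨fun k => q (j + k), by simp, ?_, fun k hk => hqP _ (by omega), fun k hk => ?_⟩
      · show q (j + (n - j)) = p
        rw [show j + (n - j) = n by omega]; exact hqn
      · show dist (q (j + k)) (q (j + (k+1))) ≤ S
        rw [show j + (k+1) = (j+k)+1 by omega]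
        exact hqS _ (by omega)
    have total := chain_concat sub1 (chain_concat hK'ch sub2)
    have hmin : n ≤ i + (K' + (n - j)) := Nat.find_min' hex_x total
    have hnat : j ≤ i + K' := by omega
    have : (j:ℝ) ≤ (i:ℝ) + (K':ℝ) := by exact_mod_cast hnat
    linarith
  -- key lower bound (y side)
  have keyy : ∀ i j : ℕ, i ≤ j → j ≤ m → ((j:ℝ) - (i:ℝ)) ≤ dist (r i) (r j) + 3 := by
    intro i j hij hjm
    obtain ⟨K', hK'len, hK'ch⟩ := conny (r i) (r j) (hrP i (le_trans hij hjm)) (hrP j hjm)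
    have sub1 : IsChainP Py S p (r i) i :=
      ⟨r, hr0, rfl, fun k hk => hrP k (by omega), fun k hk => hrS k (by omega)⟩
    have sub2 : IsChainP Py S (r j) y (m - j) := by
      refine ⟨fun k => r (j + k), by simp, ?_, fun k hk => hrP _ (by omega), fun k hk => ?_⟩
      · show r (j + (m - j)) = y
        rw [show j + (m - j) = m by omega]; exact hrm
      · show dist (r (j + k)) (r (j + (k+1))) ≤ S
        rw [show j + (k+1) = (j+k)+1 by omega]
        exact hrS _ (by omega)
    have total := chain_concat sub1 (chain_concat hK'ch sub2)
    have hmin : m ≤ i + (K' + (m - j)) := Nat.find_min' hex_y total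
    have hnat : j ≤ i + K' := by omega
    have : (j:ℝ) ≤ (i:ℝ) + (K':ℝ) := by exact_mod_cast hnat
    linarith
  -- distance upper bounds along chains
  have distx : ∀ i j : ℕ, i ≤ j → j ≤ n → dist (q i) (q j) ≤ S * ((j:ℝ) - (i:ℝ)) := by
    intro i j hij hjn
    have := chain_dist (K := n) q hqS (j - i) i (by omega)
    rw [show i + (j - i) = j by omega] at this
    rw [Nat.cast_sub hij] at this
    exact this
  have disty : ∀ i j : ℕ, i ≤ j → j ≤ m → dist (r i) (r j) ≤ S * ((j:ℝ) - (i:ℝ)) := by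
    intro i j hij hjm
    have := chain_dist (K := m) r hrS (j - i) i (by omega)
    rw [show i + (j - i) = j by omega] at this
    rw [Nat.cast_sub hij] at this
    exact this
  -- cross estimate through the gate lemma
  have crossx : ∀ i j : ℕ, i ≤ n → j ≤ m →
      ((n:ℝ) - (i:ℝ)) + (j:ℝ) ≤ 2*C*(dist (q i) (r j)) + (28*C^4 + 6*C^2 + 14*C + 6) := by
    intro i j hin hjm
    have hqPx := hqP i hin
    have hrPy := hrP j hjm
    rw [hPxdef] at hqPx
    rw [hPydef] at hrPy
    have gl := cm_gatelemma hs1 hs2 hid hKc hLc hC x y p (q i) (r j) hpxy hqPx.1 hrPy.1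
    -- gl : dist (μ (q i) (r j) p) p ≤ 2*C*(7*C^3) + 3*C^2 + 6*C
    have d1 : dist (q i) p ≤ C*(dist (q i) (r j)) + C + (14*C^4 + 3*C^2 + 6*C) := by
      have l := cm_lip2 hs1 hLc (q i) p (r j) (q i)
      rw [hid (q i) p] at l
      have t := dist_triangle (q i) (μ (q i) (r j) p) p
      have dc : dist (r j) (q i) = dist (q i) (r j) := dist_comm _ _
      have dd : dist (q i) (μ (q i) (r j) p) = dist (μ (q i) (r j) p) (q i) := dist_comm _ _
      nlinarith
    have d2 : dist p (r j) ≤ C*(dist (q i) (r j)) + C + (14*C^4 + 3*C^2 + 6*C) := by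
      have l := hLc (q i) (r j) p (r j)
      rw [hid (r j) p] at l
      have t := dist_triangle p (μ (q i) (r j) p) (r j)
      have dd : dist p (μ (q i) (r j) p) = dist (μ (q i) (r j) p) p := dist_comm _ _
      nlinarith
    have k1 := keyx i n hin le_rfl
    rw [hqn] at k1
    have k2 := keyy 0 j (Nat.zero_le j) hjm
    rw [hr0] at k2
    push_cast at k2
    linarith
  -- the combined chain
  set w : ℕ → X := fun k => if k ≤ n then q k else r (k - n) with hwdef
  have wq : ∀ k, k ≤ n → w k = q k := by
    intro k hk; rw [hwdef]; simp [hk]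
  have wr : ∀ k, n ≤ k → w k = r (k - n) := by
    intro k hk
    rw [hwdef]
    by_cases h : k ≤ n
    · have e : k = n := le_antisymm h hk
      subst e
      simp [Nat.sub_self, hr0, hqn]
    · simp [h]
  -- the master two-sided estimate
  have master : ∀ s t : ℝ, 0 ≤ s → t ≤ ((n+m : ℕ):ℝ) → s ≤ t →
      (t - s)/(100*C^4) - 100*C^4 ≤ dist (w ⌊s⌋₊) (w ⌊t⌋₊) ∧
      dist (w ⌊s⌋₊) (w ⌊t⌋₊) ≤ (100*C^4) * (t - s) + 100*C^4 := by
    intro s t hs0 httop hst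
    have ht0 : 0 ≤ t := le_trans hs0 hst
    set i := ⌊s⌋₊ with hidef
    set j := ⌊t⌋₊ with hjdef
    have hfi : (i:ℝ) ≤ s := Nat.floor_le hs0
    have hfi2 : s < (i:ℝ) + 1 := Nat.lt_floor_add_one s
    have hfj : (j:ℝ) ≤ t := Nat.floor_le ht0
    have hfj2 : t < (j:ℝ) + 1 := Nat.lt_floor_add_one t
    have hij : i ≤ j := Nat.floor_mono hst
    have hjnm : j ≤ n + m := by
      have h1 : j ≤ ⌊((n+m : ℕ):ℝ)⌋₊ := Nat.floor_mono httop
      rwa [Nat.floor_natCast] at h1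
    have hC2pos : (0:ℝ) < 100*C^4 := by nlinarith
    have hC2ge4 : (4:ℝ) ≤ 100*C^4 := by nlinarith
    have hSC2 : S ≤ 100*C^4 := by rw [hSdef]; nlinarith
    have hts0 : (0:ℝ) ≤ t - s := by linarith
    have hdiv : (t - s)/(100*C^4) ≤ t - s := by
      apply div_le_self hts0
      nlinarith
    have hijR : (j:ℝ) - (i:ℝ) ≤ (t - s) + 1 := by
      have : (j:ℝ) ≤ t := hfj
      linarith
    have htsij : t - s ≤ ((j:ℝ) - (i:ℝ)) + 1 := by linarith
    by_cases hA : j ≤ n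
    · -- both on the x side
      rw [wq i (le_trans hij hA), wq j hA]
      constructor
      · have k1 := keyx i j hij hA
        linarith
      · have k2 := distx i j hij hA
        have k3 : S * ((j:ℝ) - (i:ℝ)) ≤ S * ((t-s)+1) :=
          mul_le_mul_of_nonneg_left hijR hS0
        have k4 : S * ((t-s)+1) ≤ (100*C^4)*((t-s)+1) :=
          mul_le_mul_of_nonneg_right hSC2 (by linarith)
        nlinarith
    · by_cases hB : n ≤ i
      · -- both on the y side
        rw [wr i hB, wr j (le_trans hB hij)]
        have c1 : ((i - n : ℕ):ℝ) = (i:ℝ) - (n:ℝ) := by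
          rw [Nat.cast_sub hB]
        have c2 : ((j - n : ℕ):ℝ) = (j:ℝ) - (n:ℝ) := by
          rw [Nat.cast_sub (le_trans hB hij)]
        constructor
        · have k1 := keyy (i - n) (j - n) (by omega) (by omega)
          rw [c1, c2] at k1
          linarith
        · have k2 := disty (i - n) (j - n) (by omega) (by omega)
          rw [c1, c2] at k2
          have e : (j:ℝ) - (n:ℝ) - ((i:ℝ) - (n:ℝ)) = (j:ℝ) - (i:ℝ) := by ring
          rw [e] at k2
          have k3 : S * ((j:ℝ) - (i:ℝ)) ≤ S * ((t-s)+1) :=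
            mul_le_mul_of_nonneg_left hijR hS0
          have k4 : S * ((t-s)+1) ≤ (100*C^4)*((t-s)+1) :=
            mul_le_mul_of_nonneg_right hSC2 (by linarith)
          nlinarith
      · -- cross case : i ≤ n ≤ j
        have hin : i ≤ n := by omega
        have hnj : n ≤ j := by omega
        rw [wq i hin, wr j hnj]
        have hjnm' : j - n ≤ m := by omega
        have c2 : ((j - n : ℕ):ℝ) = (j:ℝ) - (n:ℝ) := by
          rw [Nat.cast_sub hnj]
        have cx := crossx i (j - n) hin hjnm'
        rw [c2] at cx
        have cx' : (j:ℝ) - (i:ℝ) ≤ 2*C*(dist (q i) (r (j - n))) + (28*C^4 + 6*C^2 + 14*C + 6) := by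
          linarith
        constructor
        · rw [sub_le_iff_le_add, div_le_iff₀ hC2pos]
          have hd0 : (0:ℝ) ≤ dist (q i) (r (j - n)) := dist_nonneg
          have h2C : 2*C ≤ 100*C^4 := by nlinarith
          have hBB : (28*C^4 + 6*C^2 + 14*C + 7 : ℝ) ≤ (100*C^4)*(100*C^4) := by nlinarith
          have hmul : 2*C*(dist (q i) (r (j - n))) ≤ (100*C^4)*(dist (q i) (r (j - n))) :=
            mul_le_mul_of_nonneg_right h2C hd0
          calc t - s ≤ ((j:ℝ) - (i:ℝ)) + 1 := htsij
          _ ≤ 2*C*(dist (q i) (r (j - n))) + (28*C^4 + 6*C^2 + 14*C + 7) := by linarith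
          _ ≤ (100*C^4)*(dist (q i) (r (j - n))) + (100*C^4)*(100*C^4) := by linarith
          _ = (dist (q i) (r (j - n)) + 100*C^4) * (100*C^4) := by ring
        · have d1 : dist (q i) p ≤ S * ((n:ℝ) - (i:ℝ)) := by
            have := distx i n hin le_rfl
            rwa [hqn] at this
          have d2 : dist p (r (j - n)) ≤ S * ((j:ℝ) - (n:ℝ)) := by
            have := disty 0 (j - n) (Nat.zero_le _) hjnm'
            rw [hr0, c2] at this
            push_cast at this
            simpa using this
          have t1 := dist_triangle (q i) p (r (j - n))
          have k3 : S * ((j:ℝ) - (i:ℝ)) ≤ S * ((t-s)+1) :=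
            mul_le_mul_of_nonneg_left hijR hS0
          have k4 : S * ((t-s)+1) ≤ (100*C^4)*((t-s)+1) :=
            mul_le_mul_of_nonneg_right hSC2 (by linarith)
          nlinarith
  -- assemble the quasigeodesic
  refine ⟨0, ((n+m : ℕ):ℝ), fun t => w ⌊t⌋₊, ⟨by positivity, ?_, ?_, ?_⟩, ?_, ?_⟩
  · show w ⌊(0:ℝ)⌋₊ = x
    rw [Nat.floor_zero, wq 0 (Nat.zero_le n), hq0]
  · show w ⌊((n+m : ℕ):ℝ)⌋₊ = y
    rw [Nat.floor_natCast, wr (n+m) (by omega), show n + m - n = m by omega, hrm]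
  · intro s hs t ht
    rcases le_total s t with h | h
    · have habs : |s - t| = t - s := by rw [abs_sub_comm, abs_of_nonneg (by linarith)]
      rw [habs]
      exact master s t hs.1 ht.2 h
    · have habs : |s - t| = s - t := abs_of_nonneg (by linarith)
      rw [habs]
      have := master t s ht.1 hs.2 h
      rw [dist_comm (w ⌊t⌋₊) (w ⌊s⌋₊)] at this
      exact this
  · rintro _ ⟨t, ht, rfl⟩
    show w ⌊t⌋₊ ∈ cmInterval μ x y
    have hk : ⌊t⌋₊ ≤ n + m := by
      have h1 : ⌊t⌋₊ ≤ ⌊((n+m : ℕ):ℝ)⌋₊ := Nat.floor_mono ht.2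
      rwa [Nat.floor_natCast] at h1
    by_cases hcase : ⌊t⌋₊ ≤ n
    · rw [wq _ hcase]
      have := hqP _ hcase
      rw [hPxdef] at this
      exact this.2
    · rw [wr _ (by omega)]
      have := hrP (⌊t⌋₊ - n) (by omega)
      rw [hPydef] at this
      exact this.2
  · refine ⟨(n:ℝ), ⟨by positivity, ?_⟩, ?_⟩
    · push_cast
      have : (0:ℝ) ≤ (m:ℝ) := Nat.cast_nonneg m
      linarith
    · show w ⌊((n:ℕ):ℝ)⌋₊ = p
      rw [Nat.floor_natCast, wq n le_rfl, hqn]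
end

section
/- For all C ≥ 1 there exists C₂ ≥ 1 (depending only on C) such that the following holds. Let (X, μ) be a C-coarse median space, where X is a geodesic metric space, let N : [1,∞) → [0,∞) be a function, and let A ⊆ X be an N-Morse subset. Then A is N(C₂)-quasiconvex with respect to μ. -/
open Metric Set

universe u

/-- `A ⊆ X` is `N`-Morse: every `(L, L)`-quasigeodesic with endpoints in `A` stays in the
closed `N(L)`-neighbourhood of `A`. -/
def IsMorse {X : Type*} [MetricSpace X] (N : ℝ → ℝ) (A : Set X) : Prop :=
  ∀ L : ℝ, 1 ≤ L → ∀ (a b : ℝ) (γ : ℝ → X) (x y : X), x ∈ A → y ∈ A →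
    IsQuasigeodesicOn L L a b γ x y → γ '' Set.Icc a b ⊆ closedNbhd (N L) A

namespace MorseQC

variable {X : Type*} [MetricSpace X]

/-- A discrete chain from `x` to `y` inside `S` with steps of length at most `E`. -/
def Ch (S : Set X) (E : ℝ) (x y : X) (n : ℕ) (c : ℕ → X) : Prop :=
  c 0 = x ∧ c n = y ∧ (∀ i, i ≤ n → c i ∈ S) ∧ ∀ i, i < n → dist (c i) (c (i + 1)) ≤ E

theorem Ch.mono {S T : Set X} {E : ℝ} {x y : X} {n : ℕ} {c : ℕ → X} (hST : S ⊆ T)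
    (h : Ch S E x y n c) : Ch T E x y n c :=
  ⟨h.1, h.2.1, fun i hi => hST (h.2.2.1 i hi), h.2.2.2⟩

theorem Ch.dist_le {S : Set X} {E : ℝ} {x y : X} {n : ℕ} {c : ℕ → X}
    (hE : 0 ≤ E) (h : Ch S E x y n c) :
    ∀ (k i : ℕ), i + k ≤ n → dist (c i) (c (i + k)) ≤ E * k := by
  intro k
  induction k with
  | zero => intro i _; simp
  | succ k ih =>
    intro i hik
    have h1 : dist (c i) (c (i + k)) ≤ E * k := ih i (by omega)
    have h2 : dist (c (i + k)) (c (i + k + 1)) ≤ E := h.2.2.2 _ (by omega)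
    have htri : dist (c i) (c (i + (k + 1))) ≤
        dist (c i) (c (i + k)) + dist (c (i + k)) (c (i + k + 1)) := by
      have he : i + (k + 1) = i + k + 1 := by omega
      rw [he]; exact dist_triangle _ _ _
    have : (E : ℝ) * (k + 1 : ℕ) = E * k + E := by push_cast; ring
    rw [this]
    linarith

theorem Ch.restrict {S : Set X} {E : ℝ} {x y : X} {n : ℕ} {c : ℕ → X}
    (h : Ch S E x y n c) {i : ℕ} (hi : i ≤ n) : Ch S E x (c i) i c :=
  ⟨h.1, rfl, fun l hl => h.2.2.1 l (le_trans hl hi), fun l hl => h.2.2.2 l (by omega)⟩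

theorem Ch.shift {S : Set X} {E : ℝ} {x y : X} {n : ℕ} {c : ℕ → X}
    (h : Ch S E x y n c) {j : ℕ} (hj : j ≤ n) :
    Ch S E (c j) y (n - j) (fun l => c (j + l)) := by
  refine ⟨by simp, ?_, fun l hl => h.2.2.1 _ (by omega), fun l hl => ?_⟩
  · show c (j + (n - j)) = y
    rw [show j + (n - j) = n by omega]; exact h.2.1
  · show dist (c (j + l)) (c (j + (l + 1))) ≤ E
    rw [show j + (l + 1) = (j + l) + 1 by omega]
    exact h.2.2.2 (j + l) (by omega)

theorem Ch.reverse {S : Set X} {E : ℝ} {x y : X} {n : ℕ} {c : ℕ → X}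
    (h : Ch S E x y n c) : Ch S E y x n (fun l => c (n - l)) := by
  refine ⟨by simpa using h.2.1, by simpa using h.1, fun l _ => h.2.2.1 _ (by omega),
    fun l hl => ?_⟩
  show dist (c (n - l)) (c (n - (l + 1))) ≤ E
  rw [show n - l = (n - (l + 1)) + 1 by omega, dist_comm]
  exact h.2.2.2 _ (by omega)

/-- Concatenation of two chains. -/
def catFun (n₁ : ℕ) (c₁ c₂ : ℕ → X) : ℕ → X :=
  fun l => if l ≤ n₁ then c₁ l else c₂ (l - n₁)

theorem catFun_left {n₁ : ℕ} {c₁ c₂ : ℕ → X} {l : ℕ} (hl : l ≤ n₁) :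
    catFun n₁ c₁ c₂ l = c₁ l := if_pos hl

theorem catFun_right {n₁ : ℕ} {c₁ c₂ : ℕ → X} (hjoin : c₁ n₁ = c₂ 0) {l : ℕ}
    (hl : n₁ ≤ l) : catFun n₁ c₁ c₂ l = c₂ (l - n₁) := by
  unfold catFun
  by_cases h : l ≤ n₁
  · have hln : l = n₁ := le_antisymm h hl
    subst hln
    simp [hjoin]
  · simp [h]

theorem Ch.cat {S : Set X} {E : ℝ} {x w y : X} {n m : ℕ} {c c' : ℕ → X}
    (h1 : Ch S E x w n c) (h2 : Ch S E w y m c') :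
    Ch S E x y (n + m) (catFun n c c') := by
  have hjoin : c n = c' 0 := by rw [h1.2.1, h2.1]
  refine ⟨?_, ?_, ?_, ?_⟩
  · rw [catFun_left (Nat.zero_le n)]; exact h1.1
  · rw [catFun_right hjoin (by omega), show n + m - n = m by omega]; exact h2.2.1
  · intro i hi
    by_cases h : i ≤ n
    · rw [catFun_left h]; exact h1.2.2.1 i h
    · rw [catFun_right hjoin (by omega)]; exact h2.2.2.1 _ (by omega)
  · intro i hi
    by_cases h : i + 1 ≤ n
    · rw [catFun_left (by omega), catFun_left h]
      exact h1.2.2.2 i (by omega)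
    · rw [catFun_right hjoin (by omega), catFun_right hjoin (by omega),
        show i + 1 - n = (i - n) + 1 by omega]
      exact h2.2.2.2 _ (by omega)

section Median

variable {C : ℝ} {μ : X → X → X → X}

theorem med_12 (h : IsCoarseMedian C μ) (x y z : X) : μ x y z = μ y x z := h.1 x y z

theorem med_23 (h : IsCoarseMedian C μ) (x y z : X) : μ x y z = μ x z y := h.2.1 x y z

theorem med_13 (h : IsCoarseMedian C μ) (x y z : X) : μ x y z = μ z y x := by
  rw [h.1 x y z, h.2.1 y x z, h.1 y z x]

theorem med_xxy (h : IsCoarseMedian C μ) (x y : X) : μ x x y = x := h.2.2.1 x y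

theorem med_xyx (h : IsCoarseMedian C μ) (x y : X) : μ x y x = x := by
  rw [h.2.1 x y x, h.2.2.1 x y]

theorem med_xyy (h : IsCoarseMedian C μ) (x y : X) : μ x y y = y := by
  rw [h.1 x y y, med_xyx h y x]

theorem cm1 (h : IsCoarseMedian C μ) (x y z w : X) :
    dist (μ (μ x w y) w z) (μ x w (μ y w z)) ≤ C := h.2.2.2.1 x y z w

theorem cm2₁ (h : IsCoarseMedian C μ) (x y z w : X) :
    dist (μ x y z) (μ w y z) ≤ C * dist x w + C := h.2.2.2.2 x y z w

theorem cm2₃ (h : IsCoarseMedian C μ) (x y z z' : X) :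
    dist (μ x y z) (μ x y z') ≤ C * dist z z' + C := by
  rw [med_13 h x y z, med_13 h x y z']
  exact h.2.2.2.2 z y x z'

theorem gate_idem (h : IsCoarseMedian C μ) (x y w : X) :
    dist (μ x y (μ x y w)) (μ x y w) ≤ C := by
  have hh := h.2.2.2.1 x x w y
  rw [med_xyx h x y] at hh
  rw [dist_comm]
  exact hh

/-- Key coarse median-algebra lemma: if `m` lies coarsely in `[a,b]`, `p` coarsely in
`[a,m]` and `q` coarsely in `[b,m]`, then `μ p m q` is close to `m`, whence the
"divergence" inequality. -/
theorem lemA (h : IsCoarseMedian C μ) (hC : 1 ≤ C) {a b m p q : X}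
    (hm : dist (μ a b m) m ≤ C) (hp : dist (μ a m p) p ≤ C) (hq : dist (μ b m q) q ≤ C) :
    dist p m + dist m q ≤ 2 * C * dist p q + (2 * C + 2 * (C ^ 3 + 4 * C ^ 2 + 5 * C)) := by
  have hC0 : (0 : ℝ) ≤ C := by linarith
  have hpq : μ p m q = μ q m p := by
    rw [h.2.1 p m q, h.1 p q m, h.2.1 q p m]
  -- (i) μ p m q lies coarsely in [a,m]
  have key1 : dist (μ p m q) (μ a m (μ p m q)) ≤ C ^ 2 + 2 * C := by
    have t1 : dist (μ p m q) (μ (μ a m p) m q) ≤ C * C + C := by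
      have h1 := h.2.2.2.2 p m q (μ a m p)
      have h2 : C * dist p (μ a m p) ≤ C * C :=
        mul_le_mul_of_nonneg_left (by rw [dist_comm]; exact hp) hC0
      linarith
    have t2 : dist (μ (μ a m p) m q) (μ a m (μ p m q)) ≤ C := h.2.2.2.1 a p q m
    have tri := dist_triangle (μ p m q) (μ (μ a m p) m q) (μ a m (μ p m q))
    nlinarith
  -- (ii) μ p m q lies coarsely in [b,m]
  have key2 : dist (μ p m q) (μ b m (μ p m q)) ≤ C ^ 2 + 2 * C := by
    rw [hpq]
    have t1 : dist (μ q m p) (μ (μ b m q) m p) ≤ C * C + C := by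
      have h1 := h.2.2.2.2 q m p (μ b m q)
      have h2 : C * dist q (μ b m q) ≤ C * C :=
        mul_le_mul_of_nonneg_left (by rw [dist_comm]; exact hq) hC0
      linarith
    have t2 : dist (μ (μ b m q) m p) (μ b m (μ q m p)) ≤ C := h.2.2.2.1 b q p m
    have tri := dist_triangle (μ q m p) (μ (μ b m q) m p) (μ b m (μ q m p))
    nlinarith
  -- (iii) hence μ p m q is close to m
  have key3 : dist (μ p m q) m ≤ C ^ 3 + 4 * C ^ 2 + 5 * C := by
    have t2 : dist (μ b m (μ p m q)) (μ b m (μ a m (μ p m q))) ≤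
        C * (C ^ 2 + 2 * C) + C := by
      have h1 := cm2₃ h b m (μ p m q) (μ a m (μ p m q))
      have h2 : C * dist (μ p m q) (μ a m (μ p m q)) ≤ C * (C ^ 2 + 2 * C) :=
        mul_le_mul_of_nonneg_left key1 hC0
      linarith
    have t3 : dist (μ b m (μ a m (μ p m q))) (μ (μ b m a) m (μ p m q)) ≤ C := by
      rw [dist_comm]; exact h.2.2.2.1 b a (μ p m q) m
    have t4 : dist (μ (μ b m a) m (μ p m q)) (μ m m (μ p m q)) ≤ C * C + C := by
      have h1 := h.2.2.2.2 (μ b m a) m (μ p m q) m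
      have hba : μ b m a = μ a b m := by rw [med_13 h b m a, h.2.1 a m b]
      have h2 : C * dist (μ b m a) m ≤ C * C := by
        rw [hba]; exact mul_le_mul_of_nonneg_left hm hC0
      linarith
    have t5 : μ m m (μ p m q) = m := med_xxy h m (μ p m q)
    have tri1 := dist_triangle (μ p m q) (μ b m (μ p m q)) (μ b m (μ a m (μ p m q)))
    have tri2 := dist_triangle (μ p m q) (μ b m (μ a m (μ p m q)))
      (μ (μ b m a) m (μ p m q))
    have tri3 := dist_triangle (μ p m q) (μ (μ b m a) m (μ p m q)) (μ m m (μ p m q))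
    rw [t5] at tri3 t4
    nlinarith
  have f1 : dist p (μ p m q) ≤ C * dist p q + C := by
    have h1 := cm2₃ h p m p q
    rw [med_xyx h p m] at h1
    exact h1
  have f2 : dist q (μ p m q) ≤ C * dist p q + C := by
    rw [hpq]
    have h1 := cm2₃ h q m q p
    rw [med_xyx h q m, dist_comm q p] at h1
    exact h1
  have g1 : dist p m ≤ dist p (μ p m q) + dist (μ p m q) m := dist_triangle _ _ _
  have g2 : dist m q ≤ dist m (μ p m q) + dist (μ p m q) q := dist_triangle _ _ _
  rw [dist_comm m (μ p m q), dist_comm (μ p m q) q] at g2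
  nlinarith

theorem min_step_abs (s d : ℝ) : |min s d - min (s + 1) d| ≤ 1 := by
  rcases le_total (s + 1) d with hd | hd
  · rw [min_eq_left hd, min_eq_left (by linarith)]
    rw [abs_sub_le_iff]; constructor <;> linarith
  · rcases le_total s d with h2 | h2
    · rw [min_eq_left h2, min_eq_right hd]
      rw [abs_sub_le_iff]; constructor <;> linarith
    · rw [min_eq_right h2, min_eq_right hd]; simp

/-- A gate-projected geodesic gives a chain from `x` to `y` inside the coarse
interval `[x,y]`. -/
theorem gate_chain (h : IsCoarseMedian C μ) (hC : 1 ≤ C) (hgeo : IsGeodesicSpace X)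
    (x y : X) :
    ∃ c, Ch {w : X | dist (μ x y w) w ≤ C} (2 * C ^ 2 + C) x y ⌈dist x y⌉₊ c := by
  have hC0 : (0 : ℝ) ≤ C := by linarith
  obtain ⟨γ, hγ0, hγ1, hγ⟩ := hgeo x y
  have hD : (0 : ℝ) ≤ dist x y := dist_nonneg
  have hmem : ∀ l : ℕ, min (l : ℝ) (dist x y) ∈ Icc (0 : ℝ) (dist x y) :=
    fun l => ⟨le_min (Nat.cast_nonneg l) hD, min_le_right _ _⟩
  refine ⟨fun l => μ x y (γ (min (l : ℝ) (dist x y))), ?_, ?_, ?_, ?_⟩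
  · show μ x y (γ (min ((0 : ℕ) : ℝ) (dist x y))) = x
    rw [Nat.cast_zero, min_eq_left hD, hγ0, med_xyx h]
  · show μ x y (γ (min ((⌈dist x y⌉₊ : ℕ) : ℝ) (dist x y))) = y
    rw [min_eq_right (Nat.le_ceil _), hγ1, med_xyy h]
  · intro i _
    exact gate_idem h x y _
  · intro i _
    show dist (μ x y (γ (min (i : ℝ) (dist x y))))
      (μ x y (γ (min ((i + 1 : ℕ) : ℝ) (dist x y)))) ≤ 2 * C ^ 2 + C
    have hcast : ((i + 1 : ℕ) : ℝ) = (i : ℝ) + 1 := by push_cast; ring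
    rw [hcast]
    have hd1 : dist (γ (min (i : ℝ) (dist x y))) (γ (min ((i : ℝ) + 1) (dist x y))) ≤ 1 := by
      rw [hγ _ (hmem i) _ ⟨le_min (by positivity) hD, min_le_right _ _⟩]
      exact min_step_abs _ _
    have h1 := cm2₃ h x y (γ (min (i : ℝ) (dist x y))) (γ (min ((i : ℝ) + 1) (dist x y)))
    nlinarith

/-- The shortcut chain function. -/
def midFun (μ : X → X → X → X) (x y u v : X) (γ : ℝ → X) (d : ℝ) (R : ℕ) : ℕ → X
  | 0 => u
  | (l + 1) => if l ≤ R then μ x y (μ u v (γ (min (l : ℝ) d))) else v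

/-- A shortcut chain between two points of the coarse interval `[x,y]`, of nearly
minimal length, staying inside the coarse interval. -/
theorem mid_chain (h : IsCoarseMedian C μ) (hC : 1 ≤ C) (hgeo : IsGeodesicSpace X)
    (x y u v : X) (hu : dist (μ x y u) u ≤ C) (hv : dist (μ x y v) v ≤ C) :
    ∃ c, Ch {w : X | dist (μ x y w) w ≤ C} (2 * C ^ 2 + C) u v (⌈dist u v⌉₊ + 2) c := by
  have hC0 : (0 : ℝ) ≤ C := by linarith
  obtain ⟨γ, hγ0, hγ1, hγ⟩ := hgeo u v
  have hD : (0 : ℝ) ≤ dist u v := dist_nonneg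
  set R := ⌈dist u v⌉₊ with hR
  have hmem : ∀ l : ℕ, min (l : ℝ) (dist u v) ∈ Icc (0 : ℝ) (dist u v) :=
    fun l => ⟨le_min (Nat.cast_nonneg l) hD, min_le_right _ _⟩
  refine ⟨midFun μ x y u v γ (dist u v) R, rfl, ?_, ?_, ?_⟩
  · show (if R + 1 ≤ R then μ x y (μ u v (γ (min ((R + 1 : ℕ) : ℝ) (dist u v)))) else v) = v
    rw [if_neg (by omega)]
  · intro i _
    match i with
    | 0 => exact hu
    | (l + 1) =>
      show (if l ≤ R then μ x y (μ u v (γ (min ((l : ℕ) : ℝ) (dist u v)))) else v) ∈ _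
      by_cases hl : l ≤ R
      · rw [if_pos hl]; exact gate_idem h x y _
      · rw [if_neg hl]; exact hv
  · intro i hi
    match i with
    | 0 =>
      show dist u (if 0 ≤ R then μ x y (μ u v (γ (min ((0 : ℕ) : ℝ) (dist u v)))) else v) ≤ _
      rw [if_pos (Nat.zero_le R), Nat.cast_zero, min_eq_left hD, hγ0, med_xyx h, dist_comm]
      nlinarith [hu]
    | (l + 1) =>
      show dist (if l ≤ R then μ x y (μ u v (γ (min ((l : ℕ) : ℝ) (dist u v)))) else v)
        (if l + 1 ≤ R then μ x y (μ u v (γ (min ((l + 1 : ℕ) : ℝ) (dist u v)))) else v) ≤ _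
      have hlR : l ≤ R := by omega
      rw [if_pos hlR]
      by_cases hl1 : l + 1 ≤ R
      · rw [if_pos hl1]
        have hcast : ((l + 1 : ℕ) : ℝ) = (l : ℝ) + 1 := by push_cast; ring
        rw [hcast]
        have hd1 : dist (γ (min ((l : ℕ) : ℝ) (dist u v)))
            (γ (min ((l : ℝ) + 1) (dist u v))) ≤ 1 := by
          rw [hγ _ (hmem l) _ ⟨le_min (by positivity) hD, min_le_right _ _⟩]
          exact min_step_abs _ _
        have hinner := cm2₃ h u v (γ (min ((l : ℕ) : ℝ) (dist u v)))
          (γ (min ((l : ℝ) + 1) (dist u v)))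
        have houter := cm2₃ h x y (μ u v (γ (min ((l : ℕ) : ℝ) (dist u v))))
          (μ u v (γ (min ((l : ℝ) + 1) (dist u v))))
        nlinarith [dist_nonneg (x := μ u v (γ (min ((l : ℕ) : ℝ) (dist u v))))
          (y := μ u v (γ (min ((l : ℝ) + 1) (dist u v))))]
      · rw [if_neg hl1]
        have hlR' : l = R := by omega
        subst hlR'
        rw [min_eq_right (Nat.le_ceil _), hγ1, med_xyy h]
        nlinarith [hv]

/-- Main construction: a uniform discrete quasigeodesic chain from `a₁` to `a₂`
passing exactly through `μ a₁ a₂ z`. -/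
theorem exists_chain (h : IsCoarseMedian C μ) (hC : 1 ≤ C) (hgeo : IsGeodesicSpace X)
    (a₁ a₂ z : X) :
    ∃ (n k : ℕ) (y : ℕ → X), k ≤ n ∧ y 0 = a₁ ∧ y n = a₂ ∧ y k = μ a₁ a₂ z ∧
      (∀ i j, i ≤ j → j ≤ n → dist (y i) (y j) ≤ (2 * C ^ 2 + C) * ((j - i : ℕ) : ℝ)) ∧
      (∀ i j, i ≤ j → j ≤ n → ((j - i : ℕ) : ℝ) ≤
        2 * C * dist (y i) (y j) + (2 * C + 2 * (C ^ 3 + 4 * C ^ 2 + 5 * C) + 6)) := by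
  classical
  have hC0 : (0 : ℝ) ≤ C := by linarith
  have hE0 : (0 : ℝ) ≤ 2 * C ^ 2 + C := by positivity
  set m := μ a₁ a₂ z with hmdef
  have hm : dist (μ a₁ a₂ m) m ≤ C := by
    rw [hmdef]; exact gate_idem h a₁ a₂ z
  -- first leg: minimal chain from a₁ to m in the coarse interval [a₁, m]
  have hP₁ : ∃ n, ∃ c, Ch {w : X | dist (μ a₁ m w) w ≤ C} (2 * C ^ 2 + C) a₁ m n c :=
    ⟨_, gate_chain h hC hgeo a₁ m⟩
  set n₁ := Nat.find hP₁ with hn₁def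
  obtain ⟨c₁, hc₁⟩ := Nat.find_spec hP₁
  -- second leg: minimal chain from m to a₂ in the coarse interval [a₂, m]
  have hP₂ : ∃ n, ∃ c, Ch {w : X | dist (μ a₂ m w) w ≤ C} (2 * C ^ 2 + C) m a₂ n c := by
    obtain ⟨c₀, hc₀⟩ := gate_chain h hC hgeo a₂ m
    exact ⟨_, _, hc₀.reverse⟩
  set n₂ := Nat.find hP₂ with hn₂def
  obtain ⟨c₂, hc₂⟩ := Nat.find_spec hP₂
  -- minimality: intra-leg efficiency
  have min₁ : ∀ i j, i ≤ j → j ≤ n₁ → ((j - i : ℕ) : ℝ) ≤ dist (c₁ i) (c₁ j) + 3 := by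
    intro i j hij hjn
    by_contra hcon
    push_neg at hcon
    obtain ⟨cm, hcm⟩ := mid_chain h hC hgeo a₁ m (c₁ i) (c₁ j)
      (hc₁.2.2.1 i (by omega)) (hc₁.2.2.1 j hjn)
    have hceil : (⌈dist (c₁ i) (c₁ j)⌉₊ : ℝ) < dist (c₁ i) (c₁ j) + 1 :=
      Nat.ceil_lt_add_one dist_nonneg
    have hlt : ⌈dist (c₁ i) (c₁ j)⌉₊ + 2 < j - i := by
      have hx : (⌈dist (c₁ i) (c₁ j)⌉₊ : ℝ) + 2 < ((j - i : ℕ) : ℝ) := by linarith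
      exact_mod_cast hx
    have hchain := (hc₁.restrict (show i ≤ n₁ by omega)).cat (hcm.cat (hc₁.shift hjn))
    exact Nat.find_min hP₁ (show i + (⌈dist (c₁ i) (c₁ j)⌉₊ + 2 + (n₁ - j)) < n₁ by omega)
      ⟨_, hchain⟩
  have min₂ : ∀ i j, i ≤ j → j ≤ n₂ → ((j - i : ℕ) : ℝ) ≤ dist (c₂ i) (c₂ j) + 3 := by
    intro i j hij hjn
    by_contra hcon
    push_neg at hcon
    obtain ⟨cm, hcm⟩ := mid_chain h hC hgeo a₂ m (c₂ i) (c₂ j)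
      (hc₂.2.2.1 i (by omega)) (hc₂.2.2.1 j hjn)
    have hceil : (⌈dist (c₂ i) (c₂ j)⌉₊ : ℝ) < dist (c₂ i) (c₂ j) + 1 :=
      Nat.ceil_lt_add_one dist_nonneg
    have hlt : ⌈dist (c₂ i) (c₂ j)⌉₊ + 2 < j - i := by
      have hx : (⌈dist (c₂ i) (c₂ j)⌉₊ : ℝ) + 2 < ((j - i : ℕ) : ℝ) := by linarith
      exact_mod_cast hx
    have hchain := (hc₂.restrict (show i ≤ n₂ by omega)).cat (hcm.cat (hc₂.shift hjn))
    exact Nat.find_min hP₂ (show i + (⌈dist (c₂ i) (c₂ j)⌉₊ + 2 + (n₂ - j)) < n₂ by omega)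
      ⟨_, hchain⟩
  -- the full chain
  have hjoin : c₁ n₁ = c₂ 0 := by rw [hc₁.2.1, hc₂.1]
  have hcat := (hc₁.mono Set.subset_union_left).cat
    (hc₂.mono (Set.subset_union_right (s := {w : X | dist (μ a₁ m w) w ≤ C})))
  set y : ℕ → X := catFun n₁ c₁ c₂ with hydef
  refine ⟨n₁ + n₂, n₁, y, by omega, hcat.1, hcat.2.1, ?_, ?_, ?_⟩
  · rw [hydef, catFun_left (le_refl n₁), hc₁.2.1]
  · intro i j hij hjn
    have := hcat.dist_le hE0 (j - i) i (by omega)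
    rw [show i + (j - i) = j by omega] at this
    exact this
  · intro i j hij hjn
    by_cases hj : j ≤ n₁
    · have h1 := min₁ i j hij hj
      rw [hydef, catFun_left (le_trans hij hj), catFun_left hj]
      nlinarith [dist_nonneg (x := c₁ i) (y := c₁ j), sq_nonneg C,
        mul_nonneg hC0 (mul_nonneg hC0 hC0)]
    · by_cases hi : n₁ ≤ i
      · have h1 := min₂ (i - n₁) (j - n₁) (by omega) (by omega)
        rw [show ((j - n₁) - (i - n₁) : ℕ) = (j - i : ℕ) by omega] at h1
        rw [hydef, catFun_right hjoin hi, catFun_right hjoin (by omega)]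
        nlinarith [dist_nonneg (x := c₂ (i - n₁)) (y := c₂ (j - n₁)), sq_nonneg C,
          mul_nonneg hC0 (mul_nonneg hC0 hC0)]
      · -- crossing the junction
        push_neg at hi
        have hin : i ≤ n₁ := by omega
        have hjn' : n₁ ≤ j := by omega
        have t₁ := min₁ i n₁ hin (le_refl n₁)
        rw [hc₁.2.1] at t₁
        have t₂ := min₂ 0 (j - n₁) (Nat.zero_le _) (by omega)
        rw [hc₂.1, Nat.sub_zero] at t₂
        have hp : dist (μ a₁ m (c₁ i)) (c₁ i) ≤ C := hc₁.2.2.1 i hin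
        have hq : dist (μ a₂ m (c₂ (j - n₁))) (c₂ (j - n₁)) ≤ C :=
          hc₂.2.2.1 (j - n₁) (by omega)
        have hdiv := lemA h hC hm hp hq
        have hcast : ((j - i : ℕ) : ℝ) = ((n₁ - i : ℕ) : ℝ) + ((j - n₁ : ℕ) : ℝ) := by
          rw [← Nat.cast_add]
          congr 1
          omega
        rw [hydef, catFun_left hin, catFun_right hjoin hjn', hcast]
        have hdm : dist m (c₂ (j - n₁)) = dist m (c₂ (j - n₁)) := rfl
        linarith
end Median

end MorseQC

/-- Corollary 3.4: Morse subsets of geodesic coarse median spaces are quasiconvex. -/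
theorem morse_quasiconvex :
    ∀ C : ℝ, 1 ≤ C → ∃ C₂ : ℝ, 1 ≤ C₂ ∧
      ∀ (X : Type u) [MetricSpace X], IsGeodesicSpace X →
        ∀ μ : X → X → X → X, IsCoarseMedian C μ →
          ∀ N : ℝ → ℝ, (∀ L : ℝ, 1 ≤ L → 0 ≤ N L) →
            ∀ A : Set X, IsMorse N A → IsCMQuasiconvex μ (N C₂) A := by
  intro C hC
  have hC0 : (0 : ℝ) ≤ C := by linarith
  have hC2 : (0 : ℝ) ≤ C ^ 2 := sq_nonneg C
  have hC3 : (0 : ℝ) ≤ C ^ 3 := by positivity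
  refine ⟨(2 * C ^ 2 + C) + (2 * C + 2 * (C ^ 3 + 4 * C ^ 2 + 5 * C) + 6) + 2 * C + 2,
    by nlinarith, ?_⟩
  intro X _ hgeo μ hμ N hN A hA a₁ ha₁ a₂ ha₂ m hm
  obtain ⟨z, hz⟩ := hm
  obtain ⟨n, k, y, hkn, hy0, hyn, hyk, hup, hkey⟩ :=
    MorseQC.exists_chain hμ hC hgeo a₁ a₂ z
  set L : ℝ := (2 * C ^ 2 + C) + (2 * C + 2 * (C ^ 3 + 4 * C ^ 2 + 5 * C) + 6) + 2 * C + 2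
    with hLdef
  have hL1 : (1 : ℝ) ≤ L := by rw [hLdef]; nlinarith
  have hL0 : (0 : ℝ) < L := by linarith
  have hEL : 2 * C ^ 2 + C ≤ L := by rw [hLdef]; nlinarith
  have h2CL : 2 * C ≤ L := by rw [hLdef]; nlinarith
  have hBL : (2 * C + 2 * (C ^ 3 + 4 * C ^ 2 + 5 * C) + 6) + 1 ≤ L := by
    rw [hLdef]; nlinarith
  -- the step-function quasigeodesic
  set qg : ℝ → X := fun t => y (⌊t⌋.toNat ⊓ n) with hqgdef
  have heval : ∀ i : ℕ, i ≤ n → qg (i : ℝ) = y i := by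
    intro i hi
    rw [hqgdef]
    simp only [Int.floor_natCast, Int.toNat_natCast]
    rw [min_eq_left hi]
  have hidx : ∀ s : ℝ, s ∈ Icc (0 : ℝ) (n : ℝ) →
      ((⌊s⌋.toNat : ℝ) ≤ s ∧ s < (⌊s⌋.toNat : ℝ) + 1 ∧ ⌊s⌋.toNat ≤ n) := by
    intro s hs
    have h0s : (0 : ℝ) ≤ s := hs.1
    have hfl : (0 : ℤ) ≤ ⌊s⌋ := Int.floor_nonneg.2 h0s
    have hcast : ((⌊s⌋.toNat : ℕ) : ℝ) = ((⌊s⌋ : ℤ) : ℝ) := by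
      exact_mod_cast congrArg (fun x : ℤ => (x : ℝ)) (Int.toNat_of_nonneg hfl)
    have h1 : ((⌊s⌋.toNat : ℕ) : ℝ) ≤ s := by rw [hcast]; exact Int.floor_le s
    have h2 : s < ((⌊s⌋.toNat : ℕ) : ℝ) + 1 := by rw [hcast]; exact Int.lt_floor_add_one s
    have h3 : ⌊s⌋.toNat ≤ n := by
      have : ((⌊s⌋.toNat : ℕ) : ℝ) ≤ (n : ℝ) := le_trans h1 hs.2
      exact_mod_cast this
    exact ⟨h1, h2, h3⟩
  -- the two quasigeodesic estimates, for ordered floor indices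
  have main : ∀ s ∈ Icc (0 : ℝ) (n : ℝ), ∀ t ∈ Icc (0 : ℝ) (n : ℝ),
      ⌊s⌋.toNat ≤ ⌊t⌋.toNat →
      |s - t| / L - L ≤ dist (qg s) (qg t) ∧ dist (qg s) (qg t) ≤ L * |s - t| + L := by
    intro s hs t ht hij
    obtain ⟨hi1, hi2, hin⟩ := hidx s hs
    obtain ⟨hj1, hj2, hjn⟩ := hidx t ht
    set i := ⌊s⌋.toNat
    set j := ⌊t⌋.toNat
    have hγs : qg s = y i := by rw [hqgdef]; simp only; rw [min_eq_left hin]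
    have hγt : qg t = y j := by rw [hqgdef]; simp only; rw [min_eq_left hjn]
    have hcastji : ((j - i : ℕ) : ℝ) = (j : ℝ) - (i : ℝ) := by
      rw [Nat.cast_sub hij]
    have habs1 : (j : ℝ) - (i : ℝ) ≤ |s - t| + 1 := by
      have h1 : t - s ≤ |s - t| := by rw [abs_sub_comm]; exact le_abs_self _
      linarith
    have habs2 : |s - t| ≤ ((j : ℝ) - (i : ℝ)) + 1 := by
      rw [abs_sub_le_iff]
      have hij' : (i : ℝ) ≤ (j : ℝ) := by exact_mod_cast hij
      constructor <;> linarith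
    constructor
    · -- lower bound
      have hk := hkey i j hij hjn
      rw [hcastji] at hk
      rw [hγs, hγt]
      have hd0 : (0 : ℝ) ≤ dist (y i) (y j) := dist_nonneg
      rw [sub_le_iff_le_add, div_le_iff₀ hL0]
      have e1 : 2 * C * dist (y i) (y j) ≤ L * dist (y i) (y j) :=
        mul_le_mul_of_nonneg_right h2CL hd0
      have e2 : L * 1 ≤ L * L := mul_le_mul_of_nonneg_left hL1 (le_of_lt hL0)
      calc |s - t| ≤ ((j : ℝ) - (i : ℝ)) + 1 := habs2
        _ ≤ 2 * C * dist (y i) (y j) +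
            ((2 * C + 2 * (C ^ 3 + 4 * C ^ 2 + 5 * C) + 6) + 1) := by linarith
        _ ≤ L * dist (y i) (y j) + L * L := by nlinarith
        _ = (dist (y i) (y j) + L) * L := by ring
    · -- upper bound
      have hu := hup i j hij hjn
      rw [hcastji] at hu
      rw [hγs, hγt]
      have habs0 : (0 : ℝ) ≤ |s - t| := abs_nonneg _
      have e1 : (2 * C ^ 2 + C) * ((j : ℝ) - (i : ℝ)) ≤
          (2 * C ^ 2 + C) * (|s - t| + 1) :=
        mul_le_mul_of_nonneg_left habs1 (by positivity)
      have e2 : (2 * C ^ 2 + C) * |s - t| ≤ L * |s - t| :=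
        mul_le_mul_of_nonneg_right hEL habs0
      nlinarith
  have hqg : IsQuasigeodesicOn L L 0 (n : ℝ) qg a₁ a₂ := by
    refine ⟨Nat.cast_nonneg n, ?_, ?_, ?_⟩
    · have := heval 0 (Nat.zero_le n)
      rw [Nat.cast_zero] at this
      rw [this, hy0]
    · rw [heval n (le_refl n), hyn]
    · intro s hs t ht
      rcases le_total (⌊s⌋.toNat) (⌊t⌋.toNat) with hc | hc
      · exact main s hs t ht hc
      · have hres := main t ht s hs hc
        rw [dist_comm (qg t) (qg s), abs_sub_comm t s] at hres
        exact hres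
  have himg := hA L hL1 0 (n : ℝ) qg a₁ a₂ ha₁ ha₂ hqg
  have hmem : m ∈ qg '' Icc (0 : ℝ) (n : ℝ) := by
    refine ⟨(k : ℝ), ⟨Nat.cast_nonneg k, by exact_mod_cast hkn⟩, ?_⟩
    rw [heval k hkn, hyk, hz]
  exact himg hmem
end

section
/- For all δ ≥ 0 and λ₀ ≥ 0 there exists λ ≥ 1 (depending only on δ and λ₀) such that the following holds. Let X be a geodesic, δ-hyperbolic, λ₀-bushy metric space. Then for every geodesic segment α ⊆ X (the image of an isometric embedding of a compact real interval into X) there exist two (λ, λ)-quasigeodesic lines γ, γ' : ℝ → X such that: (i) α is contained in N_λ(γ(ℝ)) ∩ N_λ(γ'(ℝ)); and (ii) for every D ≥ 0 and every x ∈ X, if dist(x, γ(ℝ)) ≤ D and dist(x, γ'(ℝ)) ≤ D, then dist(x, α) ≤ D + λ. -/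
open Metric Set

universe u

/-- `X` is `λ₀`-bushy: from any point there are three directions going arbitrarily far with
pairwise Gromov products at most `λ₀`. -/
def IsBushy (X : Type*) [MetricSpace X] (lam : ℝ) : Prop :=
  ∀ x : X, ∀ r : ℝ, 0 ≤ r → ∃ a b c : X,
    r ≤ dist x a ∧ r ≤ dist x b ∧ r ≤ dist x c ∧
    gromovProd x a b ≤ lam ∧ gromovProd x b c ≤ lam ∧ gromovProd x a c ≤ lam

/-- An `(L, A)`-quasigeodesic line. -/
def IsQuasigeodesicLine {X : Type*} [MetricSpace X] (L A : ℝ) (γ : ℝ → X) : Prop :=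
  ∀ s t : ℝ, |s - t| / L - A ≤ dist (γ s) (γ t) ∧ dist (γ s) (γ t) ≤ L * |s - t| + A

/-!
In a bushy hyperbolic space every pair `p, x` can be continued from `x` by two steps `u, u'` of
length `R` that backtrack neither towards `p` nor towards each other (Gromov products at `x` at
most `k = λ₀ + 2δ`): of three bushy directions at most one points back to `p`. Sample the segment
at spacing `R`, add one such step at each end, and continue from both ends in the two diverging
ways. The resulting bi-infinite chains never backtrack, so for `R ≫ k + δ` they are quasigeodesics
(local-to-global). A point near both chains is near their common part: otherwise the two nearby
chain points lie behind diverging directions at a fork, and the four-point condition places the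
point near that fork.
-/

section GromovProduct

variable {X : Type*} [MetricSpace X] {δ : ℝ}

lemma gromovProd_comm (x y z : X) : gromovProd x y z = gromovProd x z y := by
  unfold gromovProd; rw [dist_comm y z]; ring

lemma gromovProd_nonneg (x y z : X) : 0 ≤ gromovProd x y z := by
  have := dist_triangle y x z
  unfold gromovProd; rw [dist_comm x y]; linarith

lemma gromovProd_self_left (x y : X) : gromovProd x x y = 0 := by
  simp [gromovProd, dist_comm x y]

lemma gromovProd_add_gromovProd (x y z : X) :
    gromovProd x y z + gromovProd z y x = dist x z := by
  unfold gromovProd; rw [dist_comm z y, dist_comm z x, dist_comm y x]; ring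

lemma IsDeltaHyperbolic.nonneg (h : IsDeltaHyperbolic X δ) (x : X) : 0 ≤ δ := by
  simpa [gromovProd_self_left] using h x x x x

lemma IsDeltaHyperbolic.gromovProd_le_or_gromovProd_le (h : IsDeltaHyperbolic X δ) (p : X)
    {x u v : X} {c : ℝ} (huv : gromovProd x u v ≤ c) :
    gromovProd x p u ≤ c + δ ∨ gromovProd x p v ≤ c + δ := by
  rcases min_le_iff.mp (h x u p v) with h | h
  · left; rw [gromovProd_comm]; linarith
  · right; linarith

lemma IsDeltaHyperbolic.gromovProd_le_of_diverge (h : IsDeltaHyperbolic X δ) {k M : ℝ}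
    (hM : k + 2 * δ < M) {w p q p' q' : X} (hp : M ≤ gromovProd w p p')
    (hq : M ≤ gromovProd w q q') (hpq' : gromovProd w p' q' ≤ k) :
    gromovProd w p q ≤ k + 2 * δ := by
  have hδ := h.nonneg w
  have hpq'' : gromovProd w p q' ≤ k + δ := by
    rcases min_le_iff.mp (h w p' p q') with h | h
    · rw [gromovProd_comm] at h; linarith
    · linarith
  rcases min_le_iff.mp (h w p q q') with h | h <;> linarith

lemma IsDeltaHyperbolic.dist_le_of_gromovProd_le (h : IsDeltaHyperbolic X δ) {c D : ℝ}
    {x w p q : X} (hpq : gromovProd w p q ≤ c) (hp : dist x p ≤ D) (hq : dist x q ≤ D) :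
    dist x w ≤ D + 2 * c + 2 * δ := by
  have hmin := h x p w q
  unfold gromovProd at hmin hpq
  rw [dist_comm p w] at hmin
  rcases min_le_iff.mp hmin with h | h
  · linarith [dist_nonneg (x := w) (y := q)]
  · linarith [dist_nonneg (x := w) (y := p)]

lemma IsGeodesicSpace.exists_dist_eq_gromovProd_le (hgeo : IsGeodesicSpace X)
    (hhyp : IsDeltaHyperbolic X δ) {x w : X} {R : ℝ} (hR : 0 ≤ R) (hw : R ≤ dist x w) :
    ∃ w', dist x w' = R ∧
      ∀ q, gromovProd x q w + δ < R → gromovProd x q w' ≤ gromovProd x q w + δ := by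
  obtain ⟨γ, hγ0, hγ1, hγ⟩ := hgeo x w
  have hxw' : dist x (γ R) = R := by
    rw [← hγ0, hγ 0 ⟨le_rfl, dist_nonneg⟩ R ⟨hR, hw⟩, zero_sub, abs_neg, abs_of_nonneg hR]
  have hw'w : dist (γ R) w = dist x w - R := by
    rw [← hγ1, hγ R ⟨hR, hw⟩ _ ⟨dist_nonneg, le_rfl⟩, hγ1, abs_sub_comm,
      abs_of_nonneg (sub_nonneg.2 hw)]
  have hw' : gromovProd x (γ R) w = R := by
    unfold gromovProd; rw [hxw', hw'w]; ring
  refine ⟨γ R, hxw', fun q hq => ?_⟩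
  rcases min_le_iff.mp (hhyp x q (γ R) w) with h | h
  · exact h
  · linarith

end GromovProduct

section Chains

variable {X : Type*} [MetricSpace X] {δ k R : ℝ}

def IsStraightStep (k R : ℝ) (p x y : X) : Prop :=
  dist x y = R ∧ gromovProd x p y ≤ k

def HasStraightForks (X : Type*) [MetricSpace X] (k R : ℝ) : Prop :=
  ∀ p x : X, ∃ u u', IsStraightStep k R p x u ∧ IsStraightStep k R p x u' ∧ gromovProd x u u' ≤ k

lemma HasStraightForks.exists_step (h : HasStraightForks X k R) (p x : X) :
    ∃ y, IsStraightStep k R p x y :=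
  let ⟨u, _, hu, _⟩ := h p x; ⟨u, hu⟩

lemma IsBushy.hasStraightForks {lam₀ : ℝ} (hbushy : IsBushy X lam₀) (hgeo : IsGeodesicSpace X)
    (hhyp : IsDeltaHyperbolic X δ) (hR : lam₀ + 2 * δ < R) :
    HasStraightForks X (lam₀ + 2 * δ) R := by
  intro p x
  have hδ := hhyp.nonneg x
  have hlam₀ : 0 ≤ lam₀ := by
    obtain ⟨a, b, -, -, -, -, hab, -, -⟩ := hbushy x 0 le_rfl
    exact (gromovProd_nonneg x a b).trans hab
  obtain ⟨A, B, C, hA, hB, hC, hAB, hBC, hAC⟩ := hbushy x R (by linarith)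
  -- at most one of the three directions can point back towards `p`
  obtain ⟨U, V, hU, hV, hpU, hpV, hUV⟩ : ∃ U V, R ≤ dist x U ∧ R ≤ dist x V ∧
      gromovProd x p U ≤ lam₀ + δ ∧ gromovProd x p V ≤ lam₀ + δ ∧ gromovProd x U V ≤ lam₀ := by
    rcases hhyp.gromovProd_le_or_gromovProd_le p hAB with hpA | hpB
    · rcases hhyp.gromovProd_le_or_gromovProd_le p hBC with hpB | hpC
      · exact ⟨A, B, hA, hB, hpA, hpB, hAB⟩
      · exact ⟨A, C, hA, hC, hpA, hpC, hAC⟩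
    · rcases hhyp.gromovProd_le_or_gromovProd_le p hAC with hpA | hpC
      · exact ⟨A, B, hA, hB, hpA, hpB, hAB⟩
      · exact ⟨B, C, hB, hC, hpB, hpC, hBC⟩
  obtain ⟨u, hu, hUu⟩ := hgeo.exists_dist_eq_gromovProd_le hhyp (by linarith) hU
  obtain ⟨v, hv, hVv⟩ := hgeo.exists_dist_eq_gromovProd_le hhyp (by linarith) hV
  have hVu : gromovProd x V u ≤ lam₀ + δ := by
    have := hUu V (by rw [gromovProd_comm]; linarith)
    rw [gromovProd_comm x V U] at this; linarith
  refine ⟨u, v, ⟨hu, ?_⟩, ⟨hv, ?_⟩, ?_⟩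
  · linarith [hUu p (by linarith)]
  · linarith [hVv p (by linarith)]
  · linarith [hVv u (by rw [gromovProd_comm]; linarith), gromovProd_comm x V u]

structure IsStraightChainOn (k R : ℝ) (c : ℤ → X) (m n : ℤ) : Prop where
  dist_succ : ∀ i, m ≤ i → i < n → dist (c i) (c (i + 1)) = R
  gromovProd_le : ∀ i, m < i → i < n → gromovProd (c i) (c (i - 1)) (c (i + 1)) ≤ k

structure IsStraightChain (k R : ℝ) (g : ℤ → X) : Prop where
  dist_succ : ∀ i, dist (g i) (g (i + 1)) = R
  gromovProd_le : ∀ i, gromovProd (g i) (g (i - 1)) (g (i + 1)) ≤ k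

namespace IsStraightChain

variable {g : ℤ → X}

lemma nonneg (hg : IsStraightChain k R g) : 0 ≤ k :=
  (gromovProd_nonneg _ _ _).trans (hg.gromovProd_le 0)

lemma comp_neg (hg : IsStraightChain k R g) : IsStraightChain k R (fun i => g (-i)) where
  dist_succ i := by
    rw [dist_comm, show -(i + 1) = -i - 1 by ring]
    simpa using hg.dist_succ (-i - 1)
  gromovProd_le i := by
    rw [gromovProd_comm, show -(i - 1) = -i + 1 by ring, show -(i + 1) = -i - 1 by ring]
    exact hg.gromovProd_le (-i)

/-- Local-to-global: once `R` is large, a chain never turns back towards its past. -/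
lemma gromovProd_le_add (hg : IsStraightChain k R g) (hhyp : IsDeltaHyperbolic X δ)
    (hR : 2 * k + 2 * δ < R) {i j : ℤ} (hij : i ≤ j) :
    gromovProd (g j) (g i) (g (j + 1)) ≤ k + δ := by
  induction j, hij using Int.leInduction with
  | base => rw [gromovProd_self_left]; linarith [hg.nonneg, hhyp.nonneg (g i)]
  | succ j hij ih =>
    have hback : R - (k + δ) ≤ gromovProd (g (j + 1)) (g i) (g j) := by
      have := gromovProd_add_gromovProd (g j) (g i) (g (j + 1))
      rw [hg.dist_succ] at this; linarith
    have hturn : gromovProd (g (j + 1)) (g j) (g (j + 1 + 1)) ≤ k := by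
      simpa using hg.gromovProd_le (j + 1)
    rw [gromovProd_comm] at hturn
    rcases min_le_iff.mp (hhyp (g (j + 1)) (g (j + 1 + 1)) (g i) (g j)) with h | h
    · rw [gromovProd_comm]; linarith
    · linarith

lemma sub_le_gromovProd_pred (hg : IsStraightChain k R g) (hhyp : IsDeltaHyperbolic X δ)
    (hR : 2 * k + 2 * δ < R) {i j : ℤ} (hij : i < j) :
    R - (k + δ) ≤ gromovProd (g j) (g i) (g (j - 1)) := by
  have h := hg.gromovProd_le_add hhyp hR (Int.le_sub_one_of_lt hij)
  have hsum := gromovProd_add_gromovProd (g (j - 1)) (g i) (g j)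
  have hd := hg.dist_succ (j - 1)
  rw [sub_add_cancel] at h hd
  linarith

lemma sub_le_gromovProd_succ (hg : IsStraightChain k R g) (hhyp : IsDeltaHyperbolic X δ)
    (hR : 2 * k + 2 * δ < R) {i j : ℤ} (hij : j < i) :
    R - (k + δ) ≤ gromovProd (g j) (g i) (g (j + 1)) := by
  simpa [sub_eq_add_neg, add_comm] using hg.comp_neg.sub_le_gromovProd_pred hhyp hR (neg_lt_neg hij)

lemma sub_le_dist (hg : IsStraightChain k R g) (hhyp : IsDeltaHyperbolic X δ)
    (hR : 2 * k + 2 * δ + 1 ≤ R) {i j : ℤ} (hij : i ≤ j) : (j - i : ℝ) ≤ dist (g i) (g j) := by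
  induction j, hij using Int.leInduction with
  | base => simp
  | succ j hij ih =>
    have h := hg.gromovProd_le_add hhyp (by linarith) hij
    unfold gromovProd at h
    rw [hg.dist_succ, dist_comm (g j) (g i)] at h
    push_cast
    linarith

lemma dist_le (hg : IsStraightChain k R g) {i j : ℤ} (hij : i ≤ j) :
    dist (g i) (g j) ≤ (j - i : ℝ) * R := by
  induction j, hij using Int.leInduction with
  | base => simp
  | succ j hij ih =>
    have := dist_triangle (g i) (g j) (g (j + 1))
    rw [hg.dist_succ] at this
    push_cast
    linarith

lemma abs_sub_le_dist (hg : IsStraightChain k R g) (hhyp : IsDeltaHyperbolic X δ)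
    (hR : 2 * k + 2 * δ + 1 ≤ R) (i j : ℤ) : |(i - j : ℝ)| ≤ dist (g i) (g j) := by
  rcases le_total i j with hij | hij
  · rw [abs_sub_comm, abs_of_nonneg (sub_nonneg.2 (Int.cast_le.2 hij))]
    exact hg.sub_le_dist hhyp hR hij
  · rw [abs_of_nonneg (sub_nonneg.2 (Int.cast_le.2 hij)), dist_comm]
    exact hg.sub_le_dist hhyp hR hij

lemma dist_le_abs_sub_mul (hg : IsStraightChain k R g) (i j : ℤ) :
    dist (g i) (g j) ≤ |(i - j : ℝ)| * R := by
  rcases le_total i j with hij | hij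
  · rw [abs_sub_comm, abs_of_nonneg (sub_nonneg.2 (Int.cast_le.2 hij))]
    exact hg.dist_le hij
  · rw [abs_of_nonneg (sub_nonneg.2 (Int.cast_le.2 hij)), dist_comm]
    exact hg.dist_le hij

lemma isQuasigeodesicLine (hg : IsStraightChain k R g) (hhyp : IsDeltaHyperbolic X δ)
    (hR : 2 * k + 2 * δ + 1 ≤ R) {L : ℝ} (hL : 1 ≤ L) (hRL : R ≤ L) :
    IsQuasigeodesicLine L L (fun t : ℝ => g ⌊t⌋) := by
  intro s t
  dsimp only
  have hfloor : |(⌊s⌋ - ⌊t⌋ : ℝ) - (s - t)| ≤ 1 := by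
    rw [abs_le]
    constructor <;> linarith [Int.floor_le s, Int.floor_le t, Int.lt_floor_add_one s,
      Int.lt_floor_add_one t]
  have h₁ := abs_sub_abs_le_abs_sub (⌊s⌋ - ⌊t⌋ : ℝ) (s - t)
  have h₂ := abs_sub_abs_le_abs_sub (s - t) (⌊s⌋ - ⌊t⌋ : ℝ)
  rw [abs_sub_comm (s - t)] at h₂
  have hst := abs_nonneg (s - t)
  have hR0 : 0 ≤ R := by rw [← hg.dist_succ 0]; exact dist_nonneg
  constructor
  · have : |s - t| / L ≤ |s - t| := div_le_self hst hL
    linarith [hg.abs_sub_le_dist hhyp hR ⌊s⌋ ⌊t⌋]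
  · calc dist (g ⌊s⌋) (g ⌊t⌋) ≤ |(⌊s⌋ - ⌊t⌋ : ℝ)| * R := hg.dist_le_abs_sub_mul _ _
      _ ≤ (|s - t| + 1) * R := by gcongr; linarith
      _ ≤ L * |s - t| + L := by nlinarith

lemma exists_dist_le_of_fork {g' : ℤ → X} (hg : IsStraightChain k R g)
    (hg' : IsStraightChain k R g') (hhyp : IsDeltaHyperbolic X δ) (hR : 2 * k + 3 * δ < R)
    {m n : ℤ} (hmn : m < n) (hgg' : EqOn g g' (Icc m n))
    (hn : gromovProd (g n) (g (n + 1)) (g' (n + 1)) ≤ k)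
    (hm : gromovProd (g m) (g (m - 1)) (g' (m - 1)) ≤ k)
    {x : X} {D : ℝ} {i j : ℤ} (hi : dist x (g i) ≤ D) (hj : dist x (g' j) ≤ D) :
    ∃ l ∈ Icc m n, dist x (g l) ≤ D + (2 * k + 6 * δ) := by
  have hδ := hhyp.nonneg x
  have hk := hg.nonneg
  have hR' : 2 * k + 2 * δ < R := by linarith
  have hfork : ∀ l ∈ Icc m n, ∀ p q : X, R - (k + δ) ≤ gromovProd (g l) (g i) p →
      R - (k + δ) ≤ gromovProd (g l) (g' j) q → gromovProd (g l) p q ≤ k →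
      ∃ l ∈ Icc m n, dist x (g l) ≤ D + (2 * k + 6 * δ) := by
    intro l hl p q hp hq hpq
    have := hhyp.dist_le_of_gromovProd_le
      (hhyp.gromovProd_le_of_diverge (by linarith) hp hq hpq) hi hj
    exact ⟨l, hl, by linarith⟩
  by_cases hiI : i ∈ Icc m n
  · exact ⟨i, hiI, by linarith⟩
  by_cases hjI : j ∈ Icc m n
  · exact ⟨j, hjI, by rw [hgg' hjI]; linarith⟩
  have hnI : n ∈ Icc m n := ⟨hmn.le, le_rfl⟩
  have hmI : m ∈ Icc m n := ⟨le_rfl, hmn.le⟩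
  have hturn (l : ℤ) : gromovProd (g l) (g (l + 1)) (g (l - 1)) ≤ k := by
    rw [gromovProd_comm]; exact hg.gromovProd_le l
  simp only [mem_Icc, not_and_or, not_le] at hiI hjI
  rcases hiI with hi' | hi' <;> rcases hjI with hj' | hj'
  · refine hfork m hmI _ _ (hg.sub_le_gromovProd_pred hhyp hR' hi') ?_ hm
    rw [hgg' hmI]; exact hg'.sub_le_gromovProd_pred hhyp hR' hj'
  · refine hfork m hmI _ _ (hg.sub_le_gromovProd_pred hhyp hR' hi') ?_ (hg.gromovProd_le m)
    rw [hgg' hmI, hgg' ⟨by omega, by omega⟩]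
    exact hg'.sub_le_gromovProd_succ hhyp hR' (hmn.trans hj')
  · refine hfork n hnI _ _ (hg.sub_le_gromovProd_succ hhyp hR' hi') ?_ (hturn n)
    rw [hgg' hnI, hgg' ⟨by omega, by omega⟩]
    exact hg'.sub_le_gromovProd_pred hhyp hR' (hj'.trans hmn)
  · refine hfork n hnI _ _ (hg.sub_le_gromovProd_succ hhyp hR' hi') ?_ hn
    rw [hgg' hnI]; exact hg'.sub_le_gromovProd_succ hhyp hR' hj'

end IsStraightChain

end Chains

section Construction

open Function

variable {X : Type*} [MetricSpace X] {k R : ℝ}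

namespace IsStraightChainOn

variable {c : ℤ → X} {m n : ℤ}

lemma update_succ (hc : IsStraightChainOn k R c m n) {u : X}
    (hu : IsStraightStep k R (c (n - 1)) (c n) u) :
    IsStraightChainOn k R (update c (n + 1) u) m (n + 1) where
  dist_succ i hmi hin := by
    by_cases hi : i = n
    · subst hi; rw [update_self, update_of_ne (by omega)]; exact hu.1
    · rw [update_of_ne (by omega), update_of_ne (by omega)]
      exact hc.dist_succ i hmi (by omega)
  gromovProd_le i hmi hin := by
    by_cases hi : i = n
    · subst hi; rw [update_self, update_of_ne (by omega), update_of_ne (by omega)]; exact hu.2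
    · rw [update_of_ne (by omega), update_of_ne (by omega), update_of_ne (by omega)]
      exact hc.gromovProd_le i hmi (by omega)

lemma update_pred (hc : IsStraightChainOn k R c m n) {v : X}
    (hv : IsStraightStep k R (c (m + 1)) (c m) v) :
    IsStraightChainOn k R (update c (m - 1) v) (m - 1) n where
  dist_succ i hmi hin := by
    by_cases hi : i = m - 1
    · subst hi; rw [update_self, update_of_ne (by omega), sub_add_cancel, dist_comm]; exact hv.1
    · rw [update_of_ne (by omega), update_of_ne (by omega)]
      exact hc.dist_succ i (by omega) hin
  gromovProd_le i hmi hin := by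
    by_cases hi : i = m
    · subst hi
      rw [update_self, update_of_ne (by omega), update_of_ne (by omega), gromovProd_comm]
      exact hv.2
    · rw [update_of_ne (by omega), update_of_ne (by omega), update_of_ne (by omega)]
      exact hc.gromovProd_le i (by omega) hin

end IsStraightChainOn

def stepSeq (step : X → X → X) (p x : X) : ℕ → X
  | 0 => p
  | 1 => x
  | j + 2 => step (stepSeq step p x j) (stepSeq step p x (j + 1))

lemma IsStraightChainOn.congr {c g : ℤ → X} {m n : ℤ} (hc : IsStraightChainOn k R c m n)
    (hgc : EqOn g c (Icc m n)) : IsStraightChainOn k R g m n where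
  dist_succ i hmi hin := by
    rw [hgc ⟨hmi, hin.le⟩, hgc ⟨by omega, hin⟩]; exact hc.dist_succ i hmi hin
  gromovProd_le i hmi hin := by
    rw [hgc ⟨hmi.le, hin.le⟩, hgc ⟨by omega, by omega⟩, hgc ⟨by omega, hin⟩]
    exact hc.gromovProd_le i hmi hin

/-- The rays overlap the middle part in two consecutive indices, so each chain condition can be
read off a single piece. -/
lemma IsStraightChainOn.isStraightChain_of_rays {g : ℤ → X} {m n : ℤ}
    (hg : IsStraightChainOn k R g m n) {r l : ℕ → X}
    (hr : ∀ j, IsStraightStep k R (r j) (r (j + 1)) (r (j + 2)))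
    (hl : ∀ j, IsStraightStep k R (l j) (l (j + 1)) (l (j + 2)))
    (hgr : ∀ j : ℕ, g (n - 1 + j) = r j) (hgl : ∀ j : ℕ, g (m + 1 - j) = l j) :
    IsStraightChain k R g := by
  refine ⟨fun i => ?_, fun i => ?_⟩
  · rcases lt_or_ge i m with him | hmi
    · obtain ⟨j, rfl⟩ : ∃ j : ℕ, i = m + 1 - (j + 2 : ℕ) := ⟨(m - 1 - i).toNat, by omega⟩
      rw [hgl, show m + 1 - ((j + 2 : ℕ) : ℤ) + 1 = m + 1 - (j + 1 : ℕ) by push_cast; ring, hgl,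
        dist_comm]
      exact (hl j).1
    rcases lt_or_ge i n with hin | hni
    · exact hg.dist_succ i hmi hin
    · obtain ⟨j, rfl⟩ : ∃ j : ℕ, i = n - 1 + (j + 1 : ℕ) := ⟨(i - n).toNat, by omega⟩
      rw [hgr, show n - 1 + ((j + 1 : ℕ) : ℤ) + 1 = n - 1 + (j + 2 : ℕ) by push_cast; ring, hgr]
      exact (hr j).1
  · rcases le_or_gt i m with him | hmi
    · obtain ⟨j, rfl⟩ : ∃ j : ℕ, i = m + 1 - (j + 1 : ℕ) := ⟨(m - i).toNat, by omega⟩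
      rw [hgl, show m + 1 - ((j + 1 : ℕ) : ℤ) - 1 = m + 1 - (j + 2 : ℕ) by push_cast; ring,
        show m + 1 - ((j + 1 : ℕ) : ℤ) + 1 = m + 1 - j by push_cast; ring, hgl, hgl,
        gromovProd_comm]
      exact (hl j).2
    rcases lt_or_ge i n with hin | hni
    · exact hg.gromovProd_le i hmi hin
    · obtain ⟨j, rfl⟩ : ∃ j : ℕ, i = n - 1 + (j + 1 : ℕ) := ⟨(i - n).toNat, by omega⟩
      rw [hgr, show n - 1 + ((j + 1 : ℕ) : ℤ) - 1 = n - 1 + j by push_cast; ring,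
        show n - 1 + ((j + 1 : ℕ) : ℤ) + 1 = n - 1 + (j + 2 : ℕ) by push_cast; ring, hgr, hgr]
      exact (hr j).2

lemma IsStraightChainOn.exists_isStraightChain_eqOn
    (hstep : ∀ p x : X, ∃ y, IsStraightStep k R p x y) {c : ℤ → X} {m n : ℤ}
    (hc : IsStraightChainOn k R c m n) (hmn : m < n) :
    ∃ g, IsStraightChain k R g ∧ EqOn g c (Icc m n) := by
  choose step hstep using hstep
  set r := stepSeq step (c (n - 1)) (c n)
  set l := stepSeq step (c (m + 1)) (c m)
  set g : ℤ → X := fun i =>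
    if i < m then l (m + 1 - i).toNat else if i ≤ n then c i else r (i - (n - 1)).toNat
  have hgc : EqOn g c (Icc m n) := fun i hi => by simp [g, hi.1, hi.2]
  have hgr (j : ℕ) : g (n - 1 + j) = r j := by
    rcases j with _ | _ | j
    · rw [Nat.cast_zero, add_zero]; exact hgc ⟨by omega, by omega⟩
    · rw [Nat.cast_one, sub_add_cancel]; exact hgc ⟨by omega, le_rfl⟩
    · simp only [g, if_neg (show ¬ n - 1 + ((j + 2 : ℕ) : ℤ) < m by omega),
        if_neg (show ¬ n - 1 + ((j + 2 : ℕ) : ℤ) ≤ n by omega)]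
      congr 1; omega
  have hgl (j : ℕ) : g (m + 1 - j) = l j := by
    rcases j with _ | _ | j
    · rw [Nat.cast_zero, sub_zero]; exact hgc ⟨by omega, by omega⟩
    · rw [Nat.cast_one, add_sub_cancel_right]; exact hgc ⟨le_rfl, by omega⟩
    · simp only [g, if_pos (show m + 1 - ((j + 2 : ℕ) : ℤ) < m by omega)]
      congr 1; omega
  exact ⟨g, (hc.congr hgc).isStraightChain_of_rays (fun _ => hstep _ _) (fun _ => hstep _ _)
    hgr hgl, hgc⟩

lemma IsStraightChainOn.exists_fork (hforks : HasStraightForks X k R) {c : ℤ → X} {m n : ℤ}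
    (hc : IsStraightChainOn k R c m n) (hmn : m < n) :
    ∃ g g', IsStraightChain k R g ∧ IsStraightChain k R g' ∧
      EqOn g c (Icc m n) ∧ EqOn g' c (Icc m n) ∧
      gromovProd (g n) (g (n + 1)) (g' (n + 1)) ≤ k ∧
      gromovProd (g m) (g (m - 1)) (g' (m - 1)) ≤ k := by
  have hext (u v : X) (hu : IsStraightStep k R (c (n - 1)) (c n) u)
      (hv : IsStraightStep k R (c (m + 1)) (c m) v) :
      ∃ g, IsStraightChain k R g ∧ EqOn g c (Icc m n) ∧ g (n + 1) = u ∧ g (m - 1) = v := by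
    have hc' := (hc.update_succ hu).update_pred (v := v)
      (by rwa [update_of_ne (by omega), update_of_ne (by omega)])
    obtain ⟨g, hg, hgc⟩ := hc'.exists_isStraightChain_eqOn hforks.exists_step (by omega)
    refine ⟨g, hg, fun i ⟨hi₁, hi₂⟩ => ?_, ?_, ?_⟩
    · rw [hgc ⟨by omega, by omega⟩, update_of_ne (by omega), update_of_ne (by omega)]
    · rw [hgc ⟨by omega, le_rfl⟩, update_of_ne (by omega), update_self]
    · rw [hgc ⟨le_rfl, by omega⟩, update_self]
  obtain ⟨u, u', hu, hu', huu'⟩ := hforks (c (n - 1)) (c n)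
  obtain ⟨v, v', hv, hv', hvv'⟩ := hforks (c (m + 1)) (c m)
  obtain ⟨g, hg, hgc, hgu, hgv⟩ := hext u v hu hv
  obtain ⟨g', hg', hg'c, hg'u, hg'v⟩ := hext u' v' hu' hv'
  refine ⟨g, g', hg, hg', hgc, hg'c, ?_, ?_⟩
  · rwa [hgc ⟨hmn.le, le_rfl⟩, hgu, hg'u]
  · rwa [hgc ⟨le_rfl, hmn.le⟩, hgv, hg'v]

lemma IsStraightChainOn.exists_widen (hstep : ∀ p x : X, ∃ y, IsStraightStep k R p x y)
    {c : ℤ → X} {m n : ℤ} (hc : IsStraightChainOn k R c m n) :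
    ∃ c', IsStraightChainOn k R c' (m - 1) (n + 1) ∧ EqOn c' c (Icc m n) := by
  obtain ⟨y, hy⟩ := hstep (c (n - 1)) (c n)
  obtain ⟨z, hz⟩ := hstep (update c (n + 1) y (m + 1)) (update c (n + 1) y m)
  refine ⟨_, (hc.update_succ hy).update_pred hz, fun i ⟨hi₁, hi₂⟩ => ?_⟩
  rw [update_of_ne (by omega), update_of_ne (by omega)]

lemma add_intCast_mul_mem_Icc {a b R : ℝ} (hR : 0 ≤ R) {i N : ℤ} (hi : i ∈ Icc 0 N)
    (hN : a + N * R ≤ b) : a + i * R ∈ Icc a b := by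
  have h0 : (0 : ℝ) ≤ i := by exact_mod_cast hi.1
  have hiN : (i : ℝ) * R ≤ N * R := by gcongr; exact_mod_cast hi.2
  constructor <;> nlinarith

lemma isStraightChainOn_geodesic_samples {a b : ℝ} {σ : ℝ → X}
    (hσ : ∀ s ∈ Icc a b, ∀ t ∈ Icc a b, dist (σ s) (σ t) = |s - t|) (hk : 0 ≤ k) (hR : 0 ≤ R)
    {N : ℤ} (hN : a + N * R ≤ b) : IsStraightChainOn k R (fun i => σ (a + i * R)) 0 N := by
  have hdist {i j : ℤ} (hi : i ∈ Icc 0 N) (hj : j ∈ Icc 0 N) :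
      dist (σ (a + i * R)) (σ (a + j * R)) = |(i - j : ℝ)| * R := by
    rw [hσ _ (add_intCast_mul_mem_Icc hR hi hN) _ (add_intCast_mul_mem_Icc hR hj hN),
      ← abs_of_nonneg hR, ← abs_mul, abs_of_nonneg hR]
    ring_nf
  refine ⟨fun i h0 hi => ?_, fun i h0 hi => ?_⟩
  · rw [hdist ⟨h0, hi.le⟩ ⟨by omega, hi⟩]; norm_num
  · unfold gromovProd
    rw [hdist ⟨h0.le, hi.le⟩ ⟨by omega, by omega⟩, hdist ⟨h0.le, hi.le⟩ ⟨by omega, hi⟩,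
      hdist ⟨by omega, by omega⟩ ⟨by omega, hi⟩]
    push_cast
    rw [show (i : ℝ) - (i - 1) = 1 by ring, show (i : ℝ) - (i + 1) = -1 by ring,
      show (i - 1 : ℝ) - (i + 1) = -2 by ring]
    norm_num
    linarith

lemma exists_isStraightChainOn_near_segment (hstep : ∀ p x : X, ∃ y, IsStraightStep k R p x y)
    (hk : 0 ≤ k) (hR : 0 < R) {a b : ℝ} {σ : ℝ → X} (hab : a ≤ b)
    (hσ : ∀ s ∈ Icc a b, ∀ t ∈ Icc a b, dist (σ s) (σ t) = |s - t|) :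
    ∃ c : ℤ → X, ∃ m n : ℤ, m < n ∧ IsStraightChainOn k R c m n ∧
      (∀ i ∈ Icc m n, infDist (c i) (σ '' Icc a b) ≤ R) ∧
      ∀ t ∈ Icc a b, ∃ i ∈ Icc m n, dist (σ t) (c i) ≤ R := by
  set N := ⌊(b - a) / R⌋
  have hN : 0 ≤ N := Int.floor_nonneg.2 (div_nonneg (by linarith) hR.le)
  have hNb : a + N * R ≤ b := by linarith [(le_div_iff₀ hR).1 (Int.floor_le ((b - a) / R))]
  obtain ⟨c, hc, hcσ⟩ := (isStraightChainOn_geodesic_samples hσ hk hR.le hNb).exists_widen hstep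
  refine ⟨c, 0 - 1, N + 1, by omega, hc, fun i ⟨hi₁, hi₂⟩ => ?_, fun t ht => ?_⟩
  · obtain ⟨l, hl, hil⟩ : ∃ l ∈ Icc 0 N, dist (c i) (c l) ≤ R := by
      by_cases hi₀ : i = 0 - 1
      · refine ⟨0, ⟨le_rfl, hN⟩, ?_⟩
        rw [hi₀, ← hc.dist_succ (0 - 1) le_rfl (by omega), sub_add_cancel]
      by_cases hiN : i = N + 1
      · refine ⟨N, ⟨hN, le_rfl⟩, ?_⟩
        rw [hiN, dist_comm, ← hc.dist_succ N (by omega) (by omega)]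
      · exact ⟨i, ⟨by omega, by omega⟩, by rw [dist_self]; exact hR.le⟩
    calc infDist (c i) (σ '' Icc a b) ≤ dist (c i) (c l) :=
          infDist_le_dist_of_mem (by
            rw [hcσ hl]; exact mem_image_of_mem σ (add_intCast_mul_mem_Icc hR.le hl hNb))
      _ ≤ R := hil
  · have hi0 : 0 ≤ ⌊(t - a) / R⌋ := Int.floor_nonneg.2 (div_nonneg (by linarith [ht.1]) hR.le)
    have hiN : ⌊(t - a) / R⌋ ≤ N := Int.floor_le_floor (by gcongr; exact ht.2)
    refine ⟨⌊(t - a) / R⌋, ⟨by omega, by omega⟩, ?_⟩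
    rw [hcσ ⟨hi0, hiN⟩, hσ t ht _ (add_intCast_mul_mem_Icc hR.le ⟨hi0, hiN⟩ hNb), abs_le]
    have h₁ : ⌊(t - a) / R⌋ * R ≤ t - a := (le_div_iff₀ hR).1 (Int.floor_le _)
    have h₂ : t - a < (⌊(t - a) / R⌋ + 1) * R := (div_lt_iff₀ hR).1 (Int.lt_floor_add_one _)
    constructor <;> linarith

end Construction

lemma range_intFloor_comp {X : Type*} (g : ℤ → X) : range (fun t : ℝ => g ⌊t⌋) = range g :=
  (Function.LeftInverse.surjective (f := Int.floor) (g := ((↑) : ℤ → ℝ))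
    Int.floor_intCast).range_comp g

/-- The claim used in the proof of Corollary 4.6: in a bushy hyperbolic space, every geodesic
segment is uniformly close to two quasigeodesic lines whose common coarse intersection is the
segment itself. -/
theorem segment_between_two_lines :
    ∀ δ lam₀ : ℝ, 0 ≤ δ → 0 ≤ lam₀ → ∃ lam : ℝ, 1 ≤ lam ∧
      ∀ (X : Type u) [MetricSpace X],
        IsGeodesicSpace X → IsDeltaHyperbolic X δ → IsBushy X lam₀ →
          ∀ (a b : ℝ) (σ : ℝ → X), a ≤ b →
            (∀ s ∈ Set.Icc a b, ∀ t ∈ Set.Icc a b, dist (σ s) (σ t) = |s - t|) →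
            ∃ γ γ' : ℝ → X, IsQuasigeodesicLine lam lam γ ∧ IsQuasigeodesicLine lam lam γ' ∧
              σ '' Set.Icc a b ⊆
                closedNbhd lam (Set.range γ) ∩ closedNbhd lam (Set.range γ') ∧
              ∀ D : ℝ, 0 ≤ D → ∀ x : X,
                Metric.infDist x (Set.range γ) ≤ D → Metric.infDist x (Set.range γ') ≤ D →
                  Metric.infDist x (σ '' Set.Icc a b) ≤ D + lam := by
  intro δ lam₀ hδ hlam₀
  set k := lam₀ + 2 * δ with hk
  set R := 2 * k + 3 * δ + 1 with hR
  refine ⟨R + (2 * k + 6 * δ) + 1, by linarith, ?_⟩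
  intro X _ hgeo hhyp hbushy a b σ hab hσ
  have hforks : HasStraightForks X k R := hbushy.hasStraightForks hgeo hhyp (by linarith)
  obtain ⟨c, m, n, hmn, hc, hcσ, hσc⟩ :=
    exists_isStraightChainOn_near_segment hforks.exists_step (by linarith) (by linarith) hab hσ
  obtain ⟨g, g', hg, hg', hgc, hg'c, hn, hm⟩ := hc.exists_fork hforks hmn
  have hgg' : EqOn g g' (Icc m n) := fun i hi => (hgc hi).trans (hg'c hi).symm
  refine ⟨fun t => g ⌊t⌋, fun t => g' ⌊t⌋,
    hg.isQuasigeodesicLine hhyp (by linarith) (by linarith) (by linarith),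
    hg'.isQuasigeodesicLine hhyp (by linarith) (by linarith) (by linarith), ?_, ?_⟩
  · rintro _ ⟨t, ht, rfl⟩
    obtain ⟨i, hi, hti⟩ := hσc t ht
    refine ⟨?_, ?_⟩ <;> show infDist _ _ ≤ _ <;> rw [range_intFloor_comp]
    · exact (infDist_le_dist_of_mem (mem_range_self i)).trans (by rw [hgc hi]; linarith)
    · exact (infDist_le_dist_of_mem (mem_range_self i)).trans (by rw [hg'c hi]; linarith)
  · intro D _ x hx hx'
    rw [range_intFloor_comp] at hx hx'
    obtain ⟨_, ⟨i, rfl⟩, hi⟩ := (infDist_lt_iff (range_nonempty g)).1 (hx.trans_lt (lt_add_one D))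
    obtain ⟨_, ⟨j, rfl⟩, hj⟩ :=
      (infDist_lt_iff (range_nonempty g')).1 (hx'.trans_lt (lt_add_one D))
    obtain ⟨l, hl, hxl⟩ :=
      hg.exists_dist_le_of_fork hg' hhyp (by linarith) hmn hgg' hn hm hi.le hj.le
    rw [hgc hl] at hxl
    calc infDist x (σ '' Icc a b) ≤ infDist (c l) (σ '' Icc a b) + dist x (c l) :=
          infDist_le_infDist_add_dist
      _ ≤ D + (R + (2 * k + 6 * δ) + 1) := by linarith [hcσ l hl]
end

section
/- Let X be an unbounded metric space admitting a C-coarse median μ_X for some C ≥ 1. Let Y = X × ℝ with the metric dist((x,s),(x',s')) = dist(x,x') + |s − s'|. Then Y does not have a unique coarse median structure: there exist a constant C' ≥ 1 and two C'-coarse medians ν₁ and ν₂ on Y such that for every D ≥ 0 there are points y₁, y₂, y₃ ∈ Y with dist(ν₁(y₁,y₂,y₃), ν₂(y₁,y₂,y₃)) > D. -/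
open Metric Set

universe u

/-!
The product of `μ_X` with the median of three reals is a coarse median on `X × ℝ`. The shear
`(x, s) ↦ (x, s + d(x, x₀))` is 2-bi-Lipschitz, so conjugating the product median by it gives a
second coarse median. On the triple `(x₀, 0)`, `(x, 0)`, `(x₀, R)` with `R ≤ d(x, x₀)` the
product median returns `(x₀, 0)`, while the sheared one sees the heights `0, d(x, x₀), R`, takes
their median `R` and returns `(x₀, R)`. As `X` is unbounded, `R` can be taken arbitrarily large.
-/

open WithLp
open scoped NNReal

theorem WithLp.prod_dist_eq_add_of_L1 {α β : Type*} [PseudoMetricSpace α] [PseudoMetricSpace β]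
    (x y : WithLp 1 (α × β)) : dist x y = dist x.fst y.fst + dist x.snd y.snd := by
  simpa using WithLp.prod_dist_eq_add (p := 1) (by norm_num) x y

theorem exists_lt_dist_of_unbounded {X : Type*} [PseudoMetricSpace X]
    (hX : ∀ R : ℝ, ∃ x y : X, R < dist x y) (x₀ : X) (R : ℝ) : ∃ x, R < dist x x₀ := by
  obtain ⟨a, b, hab⟩ := hX (2 * R)
  by_contra! h
  linarith [dist_triangle_right a b x₀, h a, h b]

section Median

variable {α : Type*} [LinearOrder α]

def median3 (a b c : α) : α := max (min a b) (min (max a b) c)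

theorem median3_comm_left (a b c : α) : median3 a b c = median3 b a c := by
  simp only [median3, min_comm a b, max_comm a b]

theorem median3_comm_right (a b c : α) : median3 a b c = median3 a c b := by
  simp only [median3]; grind

@[simp]
theorem median3_self_left (a b : α) : median3 a a b = a := by
  simp [median3]

theorem median3_assoc (x y z w : α) :
    median3 (median3 x w y) w z = median3 x w (median3 y w z) := by
  simp only [median3]; grind

theorem median3_eq_of_le_of_le {a b c : α} (hac : a ≤ c) (hcb : c ≤ b) : median3 a b c = c := by
  simp [median3, hac, hcb, hac.trans hcb]

theorem abs_median3_sub_median3_le {α : Type*} [AddCommGroup α] [LinearOrder α]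
    [IsOrderedAddMonoid α] (a a' b c : α) : |median3 a b c - median3 a' b c| ≤ |a - a'| := by
  simp only [median3]
  grind

end Median

theorem isCoarseMedian_median3 : IsCoarseMedian 1 (median3 : ℝ → ℝ → ℝ → ℝ) :=
  ⟨median3_comm_left, median3_comm_right, median3_self_left,
    fun x y z w => by simp [median3_assoc],
    fun x y z w => by
      simpa [Real.dist_eq] using
        (abs_median3_sub_median3_le x w y z).trans (le_add_of_nonneg_right zero_le_one)⟩

section Constructions

variable {X Y E : Type*}

def prodMedian (μ : X → X → X → X) (ν : Y → Y → Y → Y) (p q r : WithLp 1 (X × Y)) :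
    WithLp 1 (X × Y) :=
  toLp 1 (μ p.fst q.fst r.fst, ν p.snd q.snd r.snd)

def transferMedian (e : X ≃ Y) (ν : Y → Y → Y → Y) (x y z : X) : X :=
  e.symm (ν (e x) (e y) (e z))

def shear [AddGroup E] (f : X → E) : WithLp 1 (X × E) ≃ WithLp 1 (X × E) where
  toFun p := toLp 1 (p.fst, p.snd + f p.fst)
  invFun p := toLp 1 (p.fst, p.snd - f p.fst)
  left_inv p := by simp only [toLp_fst, toLp_snd, add_sub_cancel_right]; rfl
  right_inv p := by simp only [toLp_fst, toLp_snd, sub_add_cancel]; rfl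

@[simp]
theorem shear_apply [AddGroup E] (f : X → E) (a : X) (b : E) :
    shear f (toLp 1 (a, b)) = toLp 1 (a, b + f a) := rfl

theorem shear_symm [AddGroup E] (f : X → E) : (shear f).symm = shear (-f) := by
  ext p
  simp [shear, sub_eq_add_neg]

theorem lipschitzWith_shear [PseudoMetricSpace X] [SeminormedAddCommGroup E] {K : ℝ≥0}
    {f : X → E} (hf : LipschitzWith K f) : LipschitzWith (1 + K) (shear f) :=
  LipschitzWith.of_dist_le_mul fun p q => by
    have hfpq := hf.dist_le_mul p.fst q.fst
    have hsnd := dist_add_add_le p.snd (f p.fst) q.snd (f q.fst)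
    have hK := mul_nonneg K.coe_nonneg (dist_nonneg (x := p.snd) (y := q.snd))
    simp only [shear, Equiv.coe_fn_mk, WithLp.prod_dist_eq_add_of_L1, toLp_fst, toLp_snd]
    push_cast
    linarith

end Constructions

namespace IsCoarseMedian

variable {X Y : Type*} [MetricSpace X] [MetricSpace Y] {C C' : ℝ}
  {μ : X → X → X → X} {ν : Y → Y → Y → Y}

theorem mono (hCC' : C ≤ C') (hμ : IsCoarseMedian C μ) : IsCoarseMedian C' μ := by
  obtain ⟨hcomm₁, hcomm₂, hidem, hassoc, hlip⟩ := hμ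
  refine ⟨hcomm₁, hcomm₂, hidem, fun x y z w => (hassoc x y z w).trans hCC', fun x y z w => ?_⟩
  nlinarith [hlip x y z w, dist_nonneg (x := x) (y := w)]

theorem apply_self_right (hμ : IsCoarseMedian C μ) (x y : X) : μ x y x = x := by
  rw [hμ.2.1, hμ.2.2.1]

theorem prodMedian (hμ : IsCoarseMedian C μ) (hν : IsCoarseMedian C' ν) (hC : 0 ≤ C)
    (hC' : 0 ≤ C') : IsCoarseMedian (C + C') (prodMedian μ ν) := by
  obtain ⟨hμ₁, hμ₂, hμ₃, hμ₄, hμ₅⟩ := hμ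
  obtain ⟨hν₁, hν₂, hν₃, hν₄, hν₅⟩ := hν
  refine ⟨fun x y z => ?_, fun x y z => ?_, fun x y => ?_, fun x y z w => ?_, fun x y z w => ?_⟩
  · simp only [_root_.prodMedian, hμ₁ x.fst, hν₁ x.snd]
  · simp only [_root_.prodMedian, hμ₂ x.fst, hν₂ x.snd]
  · simp only [_root_.prodMedian, hμ₃, hν₃]; rfl
  · simp only [_root_.prodMedian, WithLp.prod_dist_eq_add_of_L1, toLp_fst, toLp_snd]
    linarith [hμ₄ x.fst y.fst z.fst w.fst, hν₄ x.snd y.snd z.snd w.snd]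
  · simp only [_root_.prodMedian, WithLp.prod_dist_eq_add_of_L1, toLp_fst, toLp_snd]
    nlinarith [hμ₅ x.fst y.fst z.fst w.fst, hν₅ x.snd y.snd z.snd w.snd,
      dist_nonneg (x := x.fst) (y := w.fst), dist_nonneg (x := x.snd) (y := w.snd)]

theorem transferMedian (hν : IsCoarseMedian C ν) (hC : 0 ≤ C) {K : ℝ≥0} (hK : 1 ≤ K)
    (e : X ≃ Y) (he : LipschitzWith K e) (he' : LipschitzWith K e.symm) :
    IsCoarseMedian (K ^ 2 * C) (transferMedian e ν) := by
  obtain ⟨hν₁, hν₂, hν₃, hν₄, hν₅⟩ := hν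
  have hK' : (1 : ℝ) ≤ K := hK
  refine ⟨fun x y z => ?_, fun x y z => ?_, fun x y => ?_, fun x y z w => ?_, fun x y z w => ?_⟩
  · simp only [_root_.transferMedian, hν₁ (e x)]
  · simp only [_root_.transferMedian, hν₂ (e x)]
  · simp only [_root_.transferMedian, hν₃, Equiv.symm_apply_apply]
  · simp only [_root_.transferMedian, Equiv.apply_symm_apply]
    calc _ ≤ K * C := (he'.dist_le_mul _ _).trans (by gcongr; exact hν₄ _ _ _ _)
      _ ≤ K ^ 2 * C := by gcongr; nlinarith
  · simp only [_root_.transferMedian]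
    calc _ ≤ K * (C * (K * dist x w) + C) := (he'.dist_le_mul _ _).trans <| by
          gcongr; exact (hν₅ _ _ _ _).trans (by gcongr; exact he.dist_le_mul x w)
      _ ≤ K ^ 2 * C * dist x w + K ^ 2 * C := by
        nlinarith [mul_nonneg (mul_nonneg K.coe_nonneg hC) (sub_nonneg.2 hK')]

end IsCoarseMedian

theorem dist_prodMedian_transferMedian_shear {X : Type*} [MetricSpace X] {C : ℝ}
    {μ : X → X → X → X} (hμ : IsCoarseMedian C μ) {f : X → ℝ} {x₀ x : X} {R : ℝ}
    (hf₀ : f x₀ = 0) (hR : 0 ≤ R) (hRx : R ≤ f x) :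
    dist (prodMedian μ median3 (toLp 1 (x₀, 0)) (toLp 1 (x, 0)) (toLp 1 (x₀, R)))
      (transferMedian (shear f) (prodMedian μ median3)
        (toLp 1 (x₀, 0)) (toLp 1 (x, 0)) (toLp 1 (x₀, R))) = R := by
  simp [transferMedian, prodMedian, shear_symm, hμ.apply_self_right, hf₀,
    median3_eq_of_le_of_le hR hRx, WithLp.prod_dist_eq_add_of_L1, abs_of_nonneg hR]

/-- Remark 4.8: if `X` is an unbounded coarse median space, then `X × ℝ` with the `ℓ¹`
product metric does not have a unique coarse median structure. -/
theorem product_with_line_not_unique_coarse_median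
    {X : Type*} [MetricSpace X]
    (hX : ∀ R : ℝ, ∃ x y : X, R < dist x y)
    (C : ℝ) (hC : 1 ≤ C) (μX : X → X → X → X) (hμX : IsCoarseMedian C μX) :
    ∃ C' : ℝ, 1 ≤ C' ∧
      ∃ ν₁ ν₂ : WithLp 1 (X × ℝ) → WithLp 1 (X × ℝ) → WithLp 1 (X × ℝ) → WithLp 1 (X × ℝ),
        IsCoarseMedian C' ν₁ ∧ IsCoarseMedian C' ν₂ ∧
        ∀ D : ℝ, 0 ≤ D → ∃ y₁ y₂ y₃ : WithLp 1 (X × ℝ),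
          D < dist (ν₁ y₁ y₂ y₃) (ν₂ y₁ y₂ y₃) := by
  obtain ⟨x₀, -, -⟩ := hX 0
  have hσ : LipschitzWith 2 (shear (dist · x₀)) := by
    simpa [one_add_one_eq_two] using lipschitzWith_shear (LipschitzWith.dist_left x₀)
  have hσ_symm : LipschitzWith 2 (shear (dist · x₀)).symm := by
    simpa [shear_symm, one_add_one_eq_two] using
      lipschitzWith_shear (LipschitzWith.dist_left x₀).neg
  have hν : IsCoarseMedian (C + 1) (prodMedian μX median3) :=
    hμX.prodMedian isCoarseMedian_median3 (by linarith) zero_le_one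
  refine ⟨2 ^ 2 * (C + 1), by nlinarith, _, _, hν.mono (by nlinarith),
    hν.transferMedian (by linarith) one_le_two _ hσ hσ_symm, fun D _ => ?_⟩
  obtain ⟨x, hx⟩ := exists_lt_dist_of_unbounded hX x₀ (D + 1)
  refine ⟨toLp 1 (x₀, 0), toLp 1 (x, 0), toLp 1 (x₀, D + 1), ?_⟩
  rw [dist_prodMedian_transferMedian_shear (f := (dist · x₀)) hμX (dist_self x₀) (by linarith)
    hx.le]
  linarith
end
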